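/- arXiv:2303.13990 — 6 statements merged into one kernel-verified Lean document; each statement's English description precedes it below -/
import Mathlib

section
/- Let (R, μ) be a σ-finite nonatomic measure space, let f ≥ 0 and f_n (n ∈ ℕ) be μ-measurable functions on R such that f_n ↓ f μ-almost everywhere. Then the sequence ((f_n)_*) of nondecreasing rearrangements is nonincreasing and (f_n)_*(t) ↓ f_*(t) for Lebesgue-almost every t ∈ (0, ∞); more precisely, (f_n)_*(t) → f_*(t) at every point t of continuity of f_*. -/
open MeasureTheory Set Filter Topology ENNReal

variable {α : Type*} [MeasurableSpace α]

/-- A measure is *nonatomic* if every set of positive measure contains a measurable subset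
of strictly smaller, positive measure. -/
def Nonatomic (μ : Measure α) : Prop :=
  ∀ E : Set α, MeasurableSet E → 0 < μ E → ∃ F, F ⊆ E ∧ MeasurableSet F ∧ 0 < μ F ∧ μ F < μ E

/-- The lower distribution function `κ_f(s) = μ {x : |f x| < s}`. -/
noncomputable def lowerDistrib (μ : Measure α) (f : α → ℝ) (s : ℝ) : ℝ≥0∞ :=
  μ {x | |f x| < s}

/-- The nondecreasing rearrangement `f_*(t) = sup {s > 0 : κ_f(s) < t}` (with `sup ∅ = 0`). -/
noncomputable def ndRearr (μ : Measure α) (f : α → ℝ) (t : ℝ) : ℝ≥0∞ :=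
  sSup {y : ℝ≥0∞ | ∃ s : ℝ, 0 < s ∧ lowerDistrib μ f s < ENNReal.ofReal t ∧ y = ENNReal.ofReal s}

/-- The distribution function `μ_f(s) = μ {x : |f x| > s}`. -/
noncomputable def distrib (μ : Measure α) (f : α → ℝ) (s : ℝ) : ℝ≥0∞ :=
  μ {x | s < |f x|}

/-- The nonincreasing rearrangement `f^*(t) = inf {s > 0 : μ_f(s) ≤ t}` (with `inf ∅ = ∞`). -/
noncomputable def niRearr (μ : Measure α) (f : α → ℝ) (t : ℝ) : ℝ≥0∞ :=
  sInf {y : ℝ≥0∞ | ∃ s : ℝ, 0 < s ∧ distrib μ f s ≤ ENNReal.ofReal t ∧ y = ENNReal.ofReal s}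

/-!
Along `|F n| → |f|` a.e., Fatou's lemma for the sets `{|F n| < s}` gives
`κ_f(s) ≤ liminf κ_{F n}(s)`; passing to generalized inverses, `limsup (F n)_*(t) ≤ f_*(t')`
for every `t' > t`. Since `|f| ≤ |F n|` a.e. also gives `f_* ≤ (F n)_*`, the two bounds meet at
every continuity point of `f_*`, and the monotone function `f_*` has only countably many
discontinuities.
-/

theorem MeasureTheory.measure_liminf_le_liminf_measure {μ : Measure α} (s : ℕ → Set α) :
    μ (liminf s atTop) ≤ liminf (fun n => μ (s n)) atTop := by
  have hmono : Monotone fun n => ⋂ i ≥ n, s i :=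
    fun m n hmn => biInter_mono (fun i (hi : n ≤ i) => hmn.trans hi) fun _ _ => le_rfl
  rw [liminf_eq_iSup_iInf_of_nat, liminf_eq_iSup_iInf_of_nat]
  simp only [iSup_eq_iUnion, iInf_eq_iInter]
  rw [hmono.measure_iUnion]
  exact iSup_mono fun n => le_iInf₂ fun i hi => measure_mono (biInter_subset_of_mem hi)

section Rearrangement

variable {μ : Measure α}

theorem ndRearr_le_ndRearr_of_ae_abs_le {g h : α → ℝ} (hgh : ∀ᵐ x ∂μ, |g x| ≤ |h x|) (t : ℝ) :
    ndRearr μ g t ≤ ndRearr μ h t := by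
  refine sSup_le_sSup ?_
  rintro y ⟨s, hs, hκ, rfl⟩
  refine ⟨s, hs, lt_of_le_of_lt ?_ hκ, rfl⟩
  exact measure_mono_ae (hgh.mono fun x hx hxs => hx.trans_lt hxs)

theorem monotone_ndRearr (f : α → ℝ) : Monotone (ndRearr μ f) := by
  intro t₁ t₂ ht
  refine sSup_le_sSup ?_
  rintro y ⟨s, hs, hκ, rfl⟩
  exact ⟨s, hs, hκ.trans_le (ENNReal.ofReal_le_ofReal ht), rfl⟩

theorem ofReal_le_ndRearr {f : α → ℝ} {s t : ℝ} (hs : 0 < s)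
    (hκ : lowerDistrib μ f s < ENNReal.ofReal t) : ENNReal.ofReal s ≤ ndRearr μ f t :=
  le_sSup ⟨s, hs, hκ, rfl⟩

theorem lowerDistrib_lt_of_ofReal_lt_ndRearr {f : α → ℝ} {s t : ℝ}
    (h : ENNReal.ofReal s < ndRearr μ f t) : lowerDistrib μ f s < ENNReal.ofReal t := by
  obtain ⟨_, ⟨s', -, hκ, rfl⟩, hss'⟩ := lt_sSup_iff.1 h
  have hss' : s ≤ s' := by
    by_contra! h'
    exact (ENNReal.ofReal_le_ofReal h'.le).not_gt hss'
  exact (measure_mono fun x (hx : |f x| < s) => hx.trans_le hss').trans_lt hκ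

variable {f : α → ℝ} {F : ℕ → α → ℝ}

theorem lowerDistrib_le_liminf_of_tendsto
    (hlim : ∀ᵐ x ∂μ, Tendsto (fun n => |F n x|) atTop (𝓝 |f x|)) (s : ℝ) :
    lowerDistrib μ f s ≤ liminf (fun n => lowerDistrib μ (F n) s) atTop := by
  refine le_trans (measure_mono_ae ?_) (measure_liminf_le_liminf_measure _)
  filter_upwards [hlim] with x hx hxs
  exact mem_liminf_iff_eventually_mem.2 (hx.eventually (gt_mem_nhds hxs))

theorem limsup_ndRearr_le (hlim : ∀ᵐ x ∂μ, Tendsto (fun n => |F n x|) atTop (𝓝 |f x|))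
    {t t' : ℝ} (ht' : 0 < t') (htt' : t < t') :
    limsup (fun n => ndRearr μ (F n) t) atTop ≤ ndRearr μ f t' := by
  refine le_of_forall_lt_imp_le_of_dense fun c hc => ?_
  rcases eq_zero_or_pos c with rfl | hc0
  · exact bot_le
  have hctop : c ≠ ⊤ := (hc.trans_le le_top).ne
  obtain ⟨s, hs, rfl⟩ : ∃ s : ℝ, 0 < s ∧ ENNReal.ofReal s = c :=
    ⟨c.toReal, ENNReal.toReal_pos hc0.ne' hctop, ENNReal.ofReal_toReal hctop⟩
  have hκn : ∃ᶠ n in atTop, lowerDistrib μ (F n) s ≤ ENNReal.ofReal t :=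
    (frequently_lt_of_lt_limsup (by isBoundedDefault) hc).mono fun n hn =>
      (lowerDistrib_lt_of_ofReal_lt_ndRearr hn).le
  refine ofReal_le_ndRearr hs ?_
  calc lowerDistrib μ f s
      ≤ liminf (fun n => lowerDistrib μ (F n) s) atTop := lowerDistrib_le_liminf_of_tendsto hlim s
    _ ≤ ENNReal.ofReal t := liminf_le_of_frequently_le' hκn
    _ < ENNReal.ofReal t' := (ENNReal.ofReal_lt_ofReal_iff ht').2 htt'

theorem tendsto_ndRearr_of_continuousAt
    (hlim : ∀ᵐ x ∂μ, Tendsto (fun n => |F n x|) atTop (𝓝 |f x|))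
    (hle : ∀ n, ∀ᵐ x ∂μ, |f x| ≤ |F n x|) {t : ℝ} (ht : 0 < t)
    (hcont : ContinuousAt (ndRearr μ f) t) :
    Tendsto (fun n => ndRearr μ (F n) t) atTop (𝓝 (ndRearr μ f t)) := by
  refine tendsto_of_le_liminf_of_limsup_le ?_ ?_
  · exact le_liminf_of_le (by isBoundedDefault)
      (Eventually.of_forall fun n => ndRearr_le_ndRearr_of_ae_abs_le (hle n) t)
  · refine ge_of_tendsto (hcont.mono_left nhdsWithin_le_nhds : Tendsto _ (𝓝[>] t) _) ?_
    filter_upwards [self_mem_nhdsWithin] with t' htt'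
    exact limsup_ndRearr_le hlim (ht.trans htt') htt'

theorem ae_tendsto_ndRearr (ν : Measure ℝ) [NullSingletonClass ν]
    (hlim : ∀ᵐ x ∂μ, Tendsto (fun n => |F n x|) atTop (𝓝 |f x|))
    (hle : ∀ n, ∀ᵐ x ∂μ, |f x| ≤ |F n x|) :
    ∀ᵐ t ∂(ν.restrict (Ioi (0 : ℝ))),
      Tendsto (fun n => ndRearr μ (F n) t) atTop (𝓝 (ndRearr μ f t)) := by
  have hcont : ∀ᵐ t ∂ν, ContinuousAt (ndRearr μ f) t :=
    ((monotone_ndRearr f).countable_not_continuousAt.ae_notMem ν).mono fun _ => not_not.1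
  filter_upwards [ae_restrict_of_ae hcont, ae_restrict_mem measurableSet_Ioi] with t hct ht
  exact tendsto_ndRearr_of_continuousAt hlim hle ht hct

end Rearrangement

theorem ndRearr_tendsto_of_antitone_general
    (μ : Measure α)
    (f : α → ℝ) (F : ℕ → α → ℝ)
    (hf0 : 0 ≤ f)
    (hanti : ∀ᵐ x ∂μ, Antitone fun n => F n x)
    (hlim : ∀ᵐ x ∂μ, Tendsto (fun n => F n x) atTop (𝓝 (f x))) :
    (∀ t ∈ Ioi (0 : ℝ), Antitone fun n => ndRearr μ (F n) t) ∧
      (∀ᵐ t ∂(volume.restrict (Ioi (0 : ℝ))),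
        Tendsto (fun n => ndRearr μ (F n) t) atTop (𝓝 (ndRearr μ f t))) ∧
      ∀ t ∈ Ioi (0 : ℝ), ContinuousAt (ndRearr μ f) t →
        Tendsto (fun n => ndRearr μ (F n) t) atTop (𝓝 (ndRearr μ f t)) := by
  have hge : ∀ᵐ x ∂μ, ∀ n, f x ≤ F n x := by
    filter_upwards [hanti, hlim] with x hx hxlim n
    exact hx.le_of_tendsto hxlim n
  have habs_anti : ∀ᵐ x ∂μ, Antitone fun n => |F n x| := by
    filter_upwards [hanti, hge] with x hx hxge m n hmn
    simp only [abs_of_nonneg ((hf0 x).trans (hxge _))]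
    exact hx hmn
  have habs_lim : ∀ᵐ x ∂μ, Tendsto (fun n => |F n x|) atTop (𝓝 |f x|) :=
    hlim.mono fun x hx => hx.abs
  have habs_le : ∀ n, ∀ᵐ x ∂μ, |f x| ≤ |F n x| := fun n =>
    hge.mono fun x hx => abs_le_abs_of_nonneg (hf0 x) (hx n)
  refine ⟨fun t _ m n hmn => ndRearr_le_ndRearr_of_ae_abs_le (habs_anti.mono fun x hx => hx hmn) t,
    ae_tendsto_ndRearr volume habs_lim habs_le,
    fun t ht hcont => tendsto_ndRearr_of_continuousAt habs_lim habs_le ht hcont⟩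

/-- If `f_n ↓ f ≥ 0` μ-a.e., then the nondecreasing rearrangements satisfy `(f_n)_* ↓ f_*`
Lebesgue-a.e. on `(0, ∞)`; more precisely, `(f_n)_*(t) → f_*(t)` at every continuity point
`t ∈ (0, ∞)` of `f_*`. -/
theorem ndRearr_tendsto_of_antitone
    (μ : Measure α) [SigmaFinite μ] (hμ : Nonatomic μ)
    (f : α → ℝ) (F : ℕ → α → ℝ) (hf : Measurable f) (hF : ∀ n, Measurable (F n))
    (hf0 : 0 ≤ f)
    (hanti : ∀ᵐ x ∂μ, Antitone fun n => F n x)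
    (hlim : ∀ᵐ x ∂μ, Tendsto (fun n => F n x) atTop (𝓝 (f x))) :
    (∀ t ∈ Ioi (0 : ℝ), Antitone fun n => ndRearr μ (F n) t) ∧
      (∀ᵐ t ∂(volume.restrict (Ioi (0 : ℝ))),
        Tendsto (fun n => ndRearr μ (F n) t) atTop (𝓝 (ndRearr μ f t))) ∧
      ∀ t ∈ Ioi (0 : ℝ), ContinuousAt (ndRearr μ f) t →
        Tendsto (fun n => ndRearr μ (F n) t) atTop (𝓝 (ndRearr μ f t)) :=
  ndRearr_tendsto_of_antitone_general μ f F hf0 hanti hlim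
end

section
/- Let (R, μ) be a σ-finite nonatomic measure space, let f ≥ 0 be a μ-measurable function on R, and set T = ess sup_{x ∈ R} f(x). If there exists a measure-preserving transformation σ : R → (0, μ(R)) such that f = f_* ∘ σ μ-almost everywhere in R, then either (i) κ_f(T) < ∞, or (ii) κ_f(s) < ∞ for every s ∈ (0, T) and μ({x ∈ R : f(x) = T}) = 0. Equivalently, if neither (i) nor (ii) holds, then no map σ : R → (0, ∞) satisfies f = f_* ∘ σ μ-a.e. -/
open MeasureTheory Set Filter Topology ENNReal

variable {α : Type*} [MeasurableSpace α]

/-- The lower distribution function with extended-real argument (for `f ≥ 0`),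
`κ_f(s) = μ {x : f x < s}`, `s ∈ (0, ∞]`. -/
noncomputable def elowerDistrib (μ : Measure α) (f : α → ℝ) (s : ℝ≥0∞) : ℝ≥0∞ :=
  μ {x | ENNReal.ofReal (f x) < s}

/-!
Since `f_*` is nondecreasing, `{t : f_*(t) < s}` is an initial segment of `ℝ`. Through `σ`, the
Lebesgue measure of its part in `(0, μ(R))` is `κ_f(s)`; so if `κ_f(s) = ∞` the segment is
unbounded, `f_* < s` everywhere, and `f < s` almost everywhere. For `s = T` this gives
`μ {f = T} = 0`, and for `0 < s < T` it contradicts the definition of `T`.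
-/

lemma ndRearr_mono (μ : Measure α) (f : α → ℝ) : Monotone (ndRearr μ f) := by
  intro t t' htt'
  apply sSup_le_sSup
  rintro y ⟨s, hs, hls, rfl⟩
  exact ⟨s, hs, hls.trans_le (ENNReal.ofReal_le_ofReal htt'), rfl⟩

lemma Monotone.lt_of_volume_Ioi_inter_preimage_Iio_eq_top {φ : ℝ → ℝ≥0∞} (hφ : Monotone φ)
    {s : ℝ≥0∞} (hs : volume (Ioi 0 ∩ φ ⁻¹' Iio s) = ∞) (t : ℝ) : φ t < s := by
  by_contra! hts
  have hsub : Ioi 0 ∩ φ ⁻¹' Iio s ⊆ Ioo 0 t := fun u ⟨hu0, hus⟩ =>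
    ⟨hu0, lt_of_not_ge fun htu => (hts.trans (hφ htu)).not_gt hus⟩
  exact ((measure_mono hsub).trans_lt (Real.volume_Ioo ▸ ofReal_lt_top)).ne hs

lemma ae_lt_of_measure_setOf_lt_eq_top {μ : Measure α} {S : Set ℝ} (hS0 : S ⊆ Ioi 0)
    {σ : α → ℝ} (hσ : MeasurePreserving σ μ (volume.restrict S))
    {φ : ℝ → ℝ≥0∞} (hφ : Monotone φ) {g : α → ℝ≥0∞} (hg : ∀ᵐ x ∂μ, g x = φ (σ x))
    {s : ℝ≥0∞} (hs : μ {x | g x < s} = ∞) : ∀ᵐ x ∂μ, g x < s := by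
  have hmeas : MeasurableSet (φ ⁻¹' Iio s) := hφ.measurable measurableSet_Iio
  have hpre : {x | g x < s} =ᵐ[μ] σ ⁻¹' (φ ⁻¹' Iio s) := by
    filter_upwards [hg] with x hx
    exact congrArg (· < s) hx
  have hvol : volume (Ioi 0 ∩ φ ⁻¹' Iio s) = ∞ := by
    rw [measure_congr hpre, hσ.measure_preimage hmeas.nullMeasurableSet,
      Measure.restrict_apply hmeas] at hs
    exact top_unique (hs ▸ measure_mono fun t ⟨hts, htS⟩ => ⟨hS0 htS, hts⟩)
  filter_upwards [hg] with x hx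
  exact hx ▸ hφ.lt_of_volume_Ioi_inter_preimage_Iio_eq_top hvol (σ x)

theorem cond_of_exists_measurePreserving_ndRearr_general
    (μ : Measure α)
    (f : α → ℝ)
    (hσ : ∃ σ : α → ℝ,
      MeasurePreserving σ μ
        (volume.restrict {t : ℝ | 0 < t ∧ ENNReal.ofReal t < μ univ}) ∧
      ∀ᵐ x ∂μ, ENNReal.ofReal (f x) = ndRearr μ f (σ x)) :
    elowerDistrib μ f (essSup (fun x => ENNReal.ofReal (f x)) μ) < ∞ ∨
      ((∀ s : ℝ≥0∞, 0 < s → s < essSup (fun x => ENNReal.ofReal (f x)) μ →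
          elowerDistrib μ f s < ∞) ∧
        μ {x | ENNReal.ofReal (f x) = essSup (fun x => ENNReal.ofReal (f x)) μ} = 0) := by
  obtain ⟨σ, hσ, hfσ⟩ := hσ
  set T := essSup (fun x => ENNReal.ofReal (f x)) μ
  have ae_lt (s : ℝ≥0∞) (hs : elowerDistrib μ f s = ∞) : ∀ᵐ x ∂μ, ENNReal.ofReal (f x) < s :=
    ae_lt_of_measure_setOf_lt_eq_top (fun _ => And.left) hσ (ndRearr_mono μ f) hfσ hs
  by_cases hT : elowerDistrib μ f T < ∞
  · exact Or.inl hT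
  refine Or.inr ⟨fun s _ hsT => lt_top_iff_ne_top.mpr fun hs => ?_, ?_⟩
  · exact (essSup_le_of_ae_le s ((ae_lt s hs).mono fun _ => le_of_lt)).not_gt hsT
  · exact measure_mono_null (fun x (hx : _ = T) (hlt : _ < T) => hlt.ne hx)
      (ae_iff.mp (ae_lt T (not_lt_top_iff.mp hT)))

/-- (Ryff-type theorem, necessity.) Let `f ≥ 0` and `T = ess sup f`. If there is a
measure-preserving transformation `σ : R → (0, μ(R))` with `f = f_* ∘ σ` μ-a.e., then either
(i) `κ_f(T) < ∞`, or (ii) `κ_f(s) < ∞` for all `s ∈ (0, T)` and `μ {f = T} = 0`. -/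
theorem cond_of_exists_measurePreserving_ndRearr
    (μ : Measure α) [SigmaFinite μ] (hμ : Nonatomic μ)
    (f : α → ℝ) (hf : Measurable f) (hf0 : 0 ≤ f)
    (hσ : ∃ σ : α → ℝ,
      MeasurePreserving σ μ
        (volume.restrict {t : ℝ | 0 < t ∧ ENNReal.ofReal t < μ univ}) ∧
      ∀ᵐ x ∂μ, ENNReal.ofReal (f x) = ndRearr μ f (σ x)) :
    elowerDistrib μ f (essSup (fun x => ENNReal.ofReal (f x)) μ) < ∞ ∨
      ((∀ s : ℝ≥0∞, 0 < s → s < essSup (fun x => ENNReal.ofReal (f x)) μ →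
          elowerDistrib μ f s < ∞) ∧
        μ {x | ENNReal.ofReal (f x) = essSup (fun x => ENNReal.ofReal (f x)) μ} = 0) :=
  cond_of_exists_measurePreserving_ndRearr_general μ f hσ
end

section
/- Let (R, μ) be a σ-finite nonatomic measure space and let g ≥ 0 be a μ-measurable function on R. Then ∫_R g dμ ≥ ∫_0^{μ(R)} g_*(t) dt. -/
open MeasureTheory Set Filter Topology ENNReal

variable {α : Type*} [MeasurableSpace α]

/-!
By the layer-cake formula both sides are integrals over `s > 0` of the measures of the level sets
`{g_* > s}` and `{g > s}`, so it suffices to compare these. If `g_*(t) > s`, then `κ_g(s') < t`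
for some `s' > s`; since `R = {|g| > s} ∪ {|g| < s'}`, this forces `t > μ(R) - μ_g(s)`. Hence the
times `t < μ(R)` with `g_*(t) > s` lie in an interval of length at most `μ_g(s)`.
-/

lemma volume_setOf_lt_ofReal_lt_le (a b : ℝ≥0∞) :
    volume {t : ℝ | a < ENNReal.ofReal t ∧ ENNReal.ofReal t < b} ≤ b - a := by
  rcases eq_or_ne a ∞ with rfl | ha
  · simp
  rcases eq_or_ne b ∞ with rfl | hb
  · simp [ENNReal.top_sub ha]
  calc volume {t : ℝ | a < ENNReal.ofReal t ∧ ENNReal.ofReal t < b}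
      ≤ volume (Ioo a.toReal b.toReal) := by
        refine measure_mono fun t ⟨hat, htb⟩ => ?_
        have ht : 0 ≤ t := ENNReal.ofReal_pos.mp (pos_of_gt hat) |>.le
        exact ⟨(ENNReal.lt_ofReal_iff_toReal_lt ha).mp hat,
          (ENNReal.ofReal_lt_iff_lt_toReal ht hb).mp htb⟩
    _ = b - a := by
        rw [Real.volume_Ioo, ENNReal.ofReal_sub _ ENNReal.toReal_nonneg,
          ENNReal.ofReal_toReal ha, ENNReal.ofReal_toReal hb]

lemma measurableSet_setOf_pos_ofReal_lt (c : ℝ≥0∞) :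
    MeasurableSet {t : ℝ | 0 < t ∧ ENNReal.ofReal t < c} :=
  measurableSet_Ioi.inter (ENNReal.measurable_ofReal measurableSet_Iio)

section Rearrangement

variable (μ : Measure α) (g : α → ℝ)

lemma lowerDistrib_mono : Monotone (lowerDistrib μ g) :=
  fun _ _ h => measure_mono fun _ hx => lt_of_lt_of_le hx h

lemma ndRearr_mono_s11 : Monotone (ndRearr μ g) := by
  refine fun t₁ t₂ h => sSup_le_sSup ?_
  rintro y ⟨s, hs, hκ, rfl⟩
  exact ⟨s, hs, hκ.trans_le (ENNReal.ofReal_le_ofReal h), rfl⟩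

lemma iSup_lowerDistrib_natCast : ⨆ n : ℕ, lowerDistrib μ g n = μ univ := by
  have hmono : Monotone fun n : ℕ => {x | |g x| < (n : ℝ)} :=
    fun _ _ hnm x hx => show |g x| < _ from lt_of_lt_of_le hx (Nat.cast_le.mpr hnm)
  have hunion : (⋃ n : ℕ, {x | |g x| < (n : ℝ)}) = univ :=
    eq_univ_of_forall fun x => mem_iUnion.mpr (exists_nat_gt |g x|)
  rw [← hunion, hmono.measure_iUnion]
  rfl

lemma ndRearr_le_of_le_lowerDistrib {t s : ℝ} (h : ENNReal.ofReal t ≤ lowerDistrib μ g s) :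
    ndRearr μ g t ≤ ENNReal.ofReal s := by
  refine sSup_le ?_
  rintro y ⟨s', -, hκ, rfl⟩
  refine ENNReal.ofReal_le_ofReal (le_of_not_gt fun hss' => ?_)
  exact (hκ.trans_le h).not_ge (lowerDistrib_mono μ g hss'.le)

lemma ndRearr_lt_top {t : ℝ} (ht : ENNReal.ofReal t < μ univ) : ndRearr μ g t < ∞ := by
  rw [← iSup_lowerDistrib_natCast μ g] at ht
  obtain ⟨n, hn⟩ := lt_iSup_iff.mp ht
  exact (ndRearr_le_of_le_lowerDistrib μ g hn.le).trans_lt ENNReal.ofReal_lt_top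

lemma measure_univ_sub_iInf_lowerDistrib_le_distrib (s : ℝ) :
    μ univ - ⨅ s' > s, lowerDistrib μ g s' ≤ distrib μ g s := by
  refine tsub_le_iff_tsub_le.mp (le_iInf₂ fun s' hss' => tsub_le_iff_left.mpr ?_)
  calc μ univ ≤ μ ({x | s < |g x|} ∪ {x | |g x| < s'}) :=
        measure_mono fun x _ => (lt_or_ge |g x| s').elim Or.inr fun h => Or.inl (hss'.trans_le h)
    _ ≤ distrib μ g s + lowerDistrib μ g s' := measure_union_le _ _

lemma iInf_lowerDistrib_lt_of_lt_ndRearr {s t : ℝ} (h : ENNReal.ofReal s < ndRearr μ g t) :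
    ⨅ s' > s, lowerDistrib μ g s' < ENNReal.ofReal t := by
  obtain ⟨y, ⟨s', -, hκ, rfl⟩, hy⟩ := lt_sSup_iff.mp h
  have hss' : s < s' := lt_of_not_ge fun hs's => hy.not_ge (ENNReal.ofReal_le_ofReal hs's)
  exact (iInf₂_le s' hss').trans_lt hκ

lemma restrict_measure_lt_ndRearr_le_distrib {s : ℝ} (hs : 0 ≤ s) :
    volume.restrict {t : ℝ | 0 < t ∧ ENNReal.ofReal t < μ univ}
      {t | s < (ndRearr μ g t).toReal} ≤ distrib μ g s := by
  rw [Measure.restrict_apply' (measurableSet_setOf_pos_ofReal_lt _)]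
  refine (measure_mono ?_).trans <| (volume_setOf_lt_ofReal_lt_le _ _).trans <|
    measure_univ_sub_iInf_lowerDistrib_le_distrib μ g s
  rintro t ⟨hst, -, htμ⟩
  have hlt : ENNReal.ofReal s < ndRearr μ g t :=
    (ENNReal.ofReal_lt_iff_lt_toReal hs (ndRearr_lt_top μ g htμ).ne).mpr hst
  exact ⟨iInf_lowerDistrib_lt_of_lt_ndRearr μ g hlt, htμ⟩

lemma distrib_of_nonneg (hg0 : 0 ≤ g) (s : ℝ) : distrib μ g s = μ {x | s < g x} := by
  simp only [distrib, abs_of_nonneg (hg0 _)]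

end Rearrangement

theorem lintegral_ndRearr_le_general
    (μ : Measure α)
    (g : α → ℝ) (hg : Measurable g) (hg0 : 0 ≤ g) :
    ∫⁻ t in {t : ℝ | 0 < t ∧ ENNReal.ofReal t < μ univ}, ndRearr μ g t ≤
      ∫⁻ x, ENNReal.ofReal (g x) ∂μ := by
  set T := {t : ℝ | 0 < t ∧ ENNReal.ofReal t < μ univ}
  have hmeas : Measurable fun t => (ndRearr μ g t).toReal :=
    ENNReal.measurable_toReal.comp (ndRearr_mono_s11 μ g).measurable
  calc ∫⁻ t in T, ndRearr μ g t
      = ∫⁻ t in T, ENNReal.ofReal (ndRearr μ g t).toReal :=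
        setLIntegral_congr_fun (measurableSet_setOf_pos_ofReal_lt _) fun t ht =>
          (ENNReal.ofReal_toReal (ndRearr_lt_top μ g ht.2).ne).symm
    _ = ∫⁻ s in Ioi 0, volume.restrict T {t | s < (ndRearr μ g t).toReal} :=
        lintegral_eq_lintegral_meas_lt _ (ae_of_all _ fun _ => ENNReal.toReal_nonneg)
          hmeas.aemeasurable
    _ ≤ ∫⁻ s in Ioi 0, distrib μ g s := setLIntegral_mono' measurableSet_Ioi fun s hs =>
        restrict_measure_lt_ndRearr_le_distrib μ g (le_of_lt hs)
    _ = ∫⁻ s in Ioi 0, μ {x | s < g x} := by simp only [distrib_of_nonneg μ g hg0]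
    _ = ∫⁻ x, ENNReal.ofReal (g x) ∂μ :=
        (lintegral_eq_lintegral_meas_lt μ (ae_of_all _ hg0) hg.aemeasurable).symm

/-- For `g ≥ 0`, one has `∫_R g dμ ≥ ∫_0^{μ(R)} g_*(t) dt`. -/
theorem lintegral_ndRearr_le
    (μ : Measure α) [SigmaFinite μ] (hμ : Nonatomic μ)
    (g : α → ℝ) (hg : Measurable g) (hg0 : 0 ≤ g) :
    ∫⁻ t in {t : ℝ | 0 < t ∧ ENNReal.ofReal t < μ univ}, ndRearr μ g t ≤
      ∫⁻ x, ENNReal.ofReal (g x) ∂μ :=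
  lintegral_ndRearr_le_general μ g hg hg0
end

section
/- Let μ, ν be nonatomic σ-finite measures on R over the same σ-algebra and let p ∈ [1, ∞). Suppose there exists a finite constant C such that for every ν-measurable function f with ∫_R |f|^p dν < ∞ one has ∫_0^{min{μ(R),1}} f^*(t) dt ≤ C (∫_R |f|^p dν)^{1/p}, where f^* is the nonincreasing rearrangement of f with respect to μ (i.e., L^p(R, ν) embeds into (L^1 + L^∞)(R, μ) with norm at most C). Then μ is absolutely continuous with respect to ν, and A := sup_{E ⊂ R, μ(E) ≤ 1} ( ∫_E (dμ/dν)^{p'} dν )^{1/p'} ≤ C, where dμ/dν is the Radon–Nikodym derivative, p' is the conjugate exponent of p (with the usual modification (∫_E (dμ/dν)^{p'} dν)^{1/p'} = ess sup_E dμ/dν when p = 1), and the supremum runs over μ-measurable sets E with μ(E) ≤ 1. -/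
/-!
With `m = min (μ(R), 1)`, the level sets of `s ↦ min (m, μ_f(s))` at heights `t < m` have length
at most `f^*(t)`, so the layer-cake formula gives
`∫₀^∞ min (m, μ_f(s)) ds ≤ ∫₀^m f^* ≤ C ‖f‖_{L^p(ν)}`.
For `f = 1_F` this integral is at least `min (m, μ F)`, which forces `μ ≪ ν`. For `μ(E) ≤ 1`,
applied to `1_E f`, it dominates `∫_E |f| dμ = ∫_E (dμ/dν) |f| dν`, so `(dμ/dν) 1_E` acts on
`L^p(ν)` with norm at most `C`, and `L^p`–`L^{p'}` duality bounds `‖dμ/dν‖_{L^{p'}(E, ν)}` by `C`.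
The duality is checked against indicators of finite-measure sets when `p = 1`, and otherwise
against `|h|^{p'-1}` for the truncations `h` of `dμ/dν`, followed by Fatou.
-/

open MeasureTheory Set Filter Topology ENNReal

variable {α : Type*} [MeasurableSpace α]

/-- `A = sup { ‖dμ/dν‖_{L^q(E, ν)} : μ(E) ≤ 1 }`. -/
noncomputable def Aconst (μ ν : Measure α) (q : ℝ≥0∞) : ℝ≥0∞ :=
  ⨆ (E : Set α) (_ : MeasurableSet E) (_ : μ E ≤ 1),
    eLpNorm (fun x => (μ.rnDeriv ν x).toReal) q (ν.restrict E)

lemma distrib_antitone (μ : Measure α) (f : α → ℝ) : Antitone (distrib μ f) :=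
  fun _ _ hst => measure_mono fun _ hx => hst.trans_lt hx

lemma setOf_pos_ofReal_lt_eq_Ioo {a : ℝ≥0∞} (ha : a ≠ ∞) :
    {t : ℝ | 0 < t ∧ ENNReal.ofReal t < a} = Ioo 0 a.toReal := by
  ext t
  exact and_congr_right fun ht => ENNReal.ofReal_lt_iff_lt_toReal ht.le ha

lemma volume_distrib_gt_le_niRearr (μ : Measure α) (f : α → ℝ) (t : ℝ) :
    volume {s : ℝ | 0 < s ∧ ENNReal.ofReal t < distrib μ f s} ≤ niRearr μ f t := by
  refine le_sInf ?_
  rintro _ ⟨s', -, hds', rfl⟩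
  calc volume {s : ℝ | 0 < s ∧ ENNReal.ofReal t < distrib μ f s}
      ≤ volume (Ioo 0 s') := by
        refine measure_mono fun s hs => ⟨hs.1, lt_of_not_ge fun hs's => ?_⟩
        exact (hs.2.trans_le (distrib_antitone μ f hs's)).not_ge hds'
    _ = ENNReal.ofReal s' := by rw [Real.volume_Ioo, sub_zero]

lemma lintegral_min_distrib_le_lintegral_niRearr (μ : Measure α) (f : α → ℝ) {m : ℝ≥0∞}
    (hm : m ≠ ∞) :
    ∫⁻ s in Ioi 0, min m (distrib μ f s) ≤
      ∫⁻ t in {t : ℝ | 0 < t ∧ ENNReal.ofReal t < m}, niRearr μ f t := by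
  set φ : ℝ → ℝ := fun s => (min m (distrib μ f s)).toReal
  have hφ_ne_top : ∀ s, min m (distrib μ f s) ≠ ∞ := fun s => (min_lt_of_left_lt hm.lt_top).ne
  have hφm : Measurable φ :=
    (measurable_const.min (distrib_antitone μ f).measurable).ennreal_toReal
  have hlevel : ∀ t ∈ Ioi (0 : ℝ), volume.restrict (Ioi 0) {s | t < φ s} ≤
      (Ioo 0 m.toReal).indicator (niRearr μ f) t := by
    intro t ht
    by_cases htm : t < m.toReal
    · rw [indicator_of_mem (show t ∈ Ioo 0 m.toReal from ⟨ht, htm⟩),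
        Measure.restrict_apply' measurableSet_Ioi]
      refine (measure_mono ?_).trans (volume_distrib_gt_le_niRearr μ f t)
      rintro s ⟨hts, hs⟩
      refine ⟨hs, ?_⟩
      exact ((ENNReal.ofReal_lt_iff_lt_toReal (le_of_lt ht) (hφ_ne_top s)).2 hts).trans_le
        (min_le_right _ _)
    · have hempty : {s | t < φ s} = ∅ := eq_empty_of_forall_notMem fun s hs =>
        htm ((hs : t < φ s).trans_le (ENNReal.toReal_mono hm (min_le_left _ _)))
      simp [hempty]
  calc ∫⁻ s in Ioi 0, min m (distrib μ f s)
      = ∫⁻ s in Ioi 0, ENNReal.ofReal (φ s) := by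
        simp only [φ, ENNReal.ofReal_toReal (hφ_ne_top _)]
    _ = ∫⁻ t in Ioi 0, volume.restrict (Ioi 0) {s | t < φ s} :=
        lintegral_eq_lintegral_meas_lt _ (ae_of_all _ fun _ => ENNReal.toReal_nonneg)
          hφm.aemeasurable
    _ ≤ ∫⁻ t in Ioi 0, (Ioo 0 m.toReal).indicator (niRearr μ f) t :=
        setLIntegral_mono' measurableSet_Ioi hlevel
    _ = ∫⁻ t in {t : ℝ | 0 < t ∧ ENNReal.ofReal t < m}, niRearr μ f t := by
        rw [setLIntegral_indicator measurableSet_Ioo, inter_eq_left.2 Ioo_subset_Ioi_self,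
          setOf_pos_ofReal_lt_eq_Ioo hm]

lemma setLIntegral_enorm_le_lintegral_min_distrib_indicator (μ : Measure α) {f : α → ℝ}
    (hf : Measurable f) {E : Set α} (hE1 : μ E ≤ 1) :
    ∫⁻ x in E, ‖f x‖ₑ ∂μ ≤ ∫⁻ s in Ioi 0, min (min (μ univ) 1) (distrib μ (E.indicator f) s) := by
  simp only [Real.enorm_eq_ofReal_abs]
  rw [lintegral_eq_lintegral_meas_lt _ (ae_of_all _ fun x => abs_nonneg (f x))
    hf.abs.aemeasurable]
  refine lintegral_mono fun s => ?_
  rw [Measure.restrict_apply (measurableSet_lt measurable_const hf.abs)]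
  refine le_min (le_min (measure_mono (subset_univ _))
    ((measure_mono inter_subset_right).trans hE1)) (measure_mono ?_)
  rintro x ⟨hx, hxE⟩
  simpa [distrib, indicator_of_mem hxE] using hx

lemma min_measure_le_lintegral_min_distrib_indicator_one (μ : Measure α) (m : ℝ≥0∞)
    (F : Set α) :
    min m (μ F) ≤ ∫⁻ s in Ioi 0, min m (distrib μ (F.indicator 1) s) := by
  have hdistrib : ∀ s ∈ Ioo (0 : ℝ) 1, distrib μ (F.indicator 1) s = μ F := by
    intro s ⟨hs0, hs1⟩
    rw [distrib]
    congr 1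
    ext x
    by_cases hx : x ∈ F <;> simp [hx, hs1, hs0.le.not_gt]
  calc min m (μ F) = ∫⁻ _ in Ioo (0 : ℝ) 1, min m (μ F) := by simp
    _ = ∫⁻ s in Ioo (0 : ℝ) 1, min m (distrib μ (F.indicator 1) s) :=
        setLIntegral_congr_fun measurableSet_Ioo fun s hs => by rw [hdistrib s hs]
    _ ≤ ∫⁻ s in Ioi 0, min m (distrib μ (F.indicator 1) s) :=
        lintegral_mono_set Ioo_subset_Ioi_self

lemma absolutelyContinuous_of_lintegral_min_distrib_le {μ ν : Measure α} {p C : ℝ≥0∞}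
    (h : ∀ f : α → ℝ, Measurable f → eLpNorm f p ν < ∞ →
      ∫⁻ s in Ioi 0, min (min (μ univ) 1) (distrib μ f s) ≤ C * eLpNorm f p ν) :
    μ ≪ ν := by
  refine Measure.AbsolutelyContinuous.mk fun F hF hνF => ?_
  have hnorm : eLpNorm (F.indicator 1 : α → ℝ) p ν = 0 := by
    rw [eLpNorm_congr_ae (indicator_meas_zero hνF), eLpNorm_zero]
  have hmin := (min_measure_le_lintegral_min_distrib_indicator_one μ _ F).trans
    (h _ (measurable_one.indicator hF) (by simp [hnorm]))
  rw [hnorm, mul_zero, nonpos_iff_eq_zero, min_eq_zero, min_eq_zero] at hmin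
  rcases hmin with (hμ | h10) | hμF
  · exact measure_mono_null (subset_univ F) hμ
  · exact absurd h10 one_ne_zero
  · exact hμF

section Duality

variable {ν : Measure α} {g : α → ℝ} {p q C : ℝ≥0∞}

lemma eLpNorm_top_le_of_forall_setLIntegral_le [SigmaFinite ν] (hg : Measurable g)
    (h : ∀ s, MeasurableSet s → ν s < ∞ → ∫⁻ x in s, ‖g x‖ₑ ∂ν ≤ C * ν s) :
    eLpNorm g ∞ ν ≤ C := by
  rw [eLpNorm_exponent_top]
  refine eLpNormEssSup_le_of_ae_enorm_bound
    (ae_le_of_forall_setLIntegral_le_of_sigmaFinite hg.enorm fun s hs hνs => ?_)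
  rw [setLIntegral_const]
  exact h s hs hνs

/-- Test against `f = |h|^(q-1)`: `‖h‖_q^q ≤ C ‖f‖_p = C ‖h‖_q^(q-1)`, and `‖h‖_q < ∞` allows
cancelling. -/
lemma eLpNorm_le_of_enorm_le_of_forall_lintegral_mul_le [p.HolderConjugate q] (hp : p ≠ ∞)
    (hq : q ≠ ∞) {h : α → ℝ} (hh : Measurable h) (hhg : ∀ x, ‖h x‖ₑ ≤ ‖g x‖ₑ)
    (hfin : eLpNorm h q ν ≠ ∞)
    (hC : ∀ f : α → ℝ, Measurable f → eLpNorm f p ν < ∞ →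
      ∫⁻ x, ‖g x‖ₑ * ‖f x‖ₑ ∂ν ≤ C * eLpNorm f p ν) :
    eLpNorm h q ν ≤ C := by
  have hpq := ENNReal.HolderConjugate.toReal_of_ne_top hp hq
  have hq0 : q ≠ 0 := ENNReal.HolderConjugate.ne_zero q p
  set r := q.toReal - 1
  have hr : 0 < r := sub_pos.2 hpq.symm.lt
  have hq_eq : q.toReal = 1 + r := by ring
  set N := eLpNorm h q ν
  set f : α → ℝ := fun x => ‖h x‖ ^ r
  have hf_norm : eLpNorm f p ν = N ^ r := by
    have hpr : p * ENNReal.ofReal r = q := by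
      rw [← ENNReal.ofReal_toReal hp, ← ENNReal.ofReal_mul ENNReal.toReal_nonneg, mul_comm,
        hpq.symm.sub_one_mul_conj, ENNReal.ofReal_toReal hq]
    rw [eLpNorm_norm_rpow h hr, hpr]
  have hf_enorm : ∀ x, ‖f x‖ₑ = ‖h x‖ₑ ^ r := fun x => by
    rw [Real.enorm_rpow_of_nonneg (norm_nonneg _) hr.le, enorm_norm]
  have hN_pow : N ^ q.toReal ≤ C * N ^ r := calc
    N ^ q.toReal = ∫⁻ x, ‖h x‖ₑ ^ q.toReal ∂ν := by
      rw [lintegral_rpow_enorm_eq_rpow_eLpNorm' (ENNReal.toReal_pos hq0 hq),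
        ← eLpNorm_eq_eLpNorm' hq0 hq]
    _ ≤ ∫⁻ x, ‖g x‖ₑ * ‖f x‖ₑ ∂ν := lintegral_mono fun x => by
      rw [hf_enorm, hq_eq, ENNReal.rpow_add_of_nonneg _ _ zero_le_one hr.le, ENNReal.rpow_one]
      exact mul_le_mul_left (hhg x) _
    _ ≤ C * N ^ r := by
      rw [← hf_norm]
      exact hC f (hh.norm.pow_const r) (hf_norm ▸ ENNReal.rpow_lt_top_of_nonneg hr.le hfin)
  rcases eq_or_ne N 0 with hN0 | hN0
  · exact hN0 ▸ zero_le
  rw [hq_eq, ENNReal.rpow_add_of_nonneg _ _ zero_le_one hr.le, ENNReal.rpow_one] at hN_pow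
  exact (ENNReal.mul_le_mul_iff_left (ENNReal.rpow_pos (pos_iff_ne_zero.2 hN0) hfin).ne'
    (ENNReal.rpow_ne_top_of_nonneg hr.le hfin)).1 hN_pow

lemma eLpNorm_le_of_forall_lintegral_mul_le_of_ne_top [SigmaFinite ν] [p.HolderConjugate q]
    (hp : p ≠ ∞) (hq : q ≠ ∞) (hg : Measurable g)
    (hC : ∀ f : α → ℝ, Measurable f → eLpNorm f p ν < ∞ →
      ∫⁻ x, ‖g x‖ₑ * ‖f x‖ₑ ∂ν ≤ C * eLpNorm f p ν) :
    eLpNorm g q ν ≤ C := by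
  set h : ℕ → α → ℝ := fun n => (spanningSets ν n).indicator fun x => min ‖g x‖ n
  have hhm : ∀ n, Measurable (h n) := fun n =>
    (hg.norm.min measurable_const).indicator (measurableSet_spanningSets ν n)
  have hbound : ∀ n, eLpNorm (h n) q ν ≤ C := by
    intro n
    refine eLpNorm_le_of_enorm_le_of_forall_lintegral_mul_le hp hq (hhm n) (fun x => ?_) ?_ hC
    · refine enorm_le_iff_norm_le.2 ((norm_indicator_le_norm_self _ x).trans ?_)
      rw [Real.norm_of_nonneg (le_min (norm_nonneg _) n.cast_nonneg)]
      exact min_le_left _ _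
    · refine ne_top_of_le_ne_top (memLp_indicator_const q (measurableSet_spanningSets ν n) (n : ℝ)
        (Or.inr (measure_spanningSets_lt_top ν n).ne)).eLpNorm_ne_top (eLpNorm_mono fun x => ?_)
      by_cases hx : x ∈ spanningSets ν n <;> simp [h, hx, abs_of_nonneg]
  have htendsto : ∀ x, Tendsto (fun n => h n x) atTop (𝓝 ‖g x‖) := fun x =>
    tendsto_const_nhds.congr' <| by
      filter_upwards [eventually_mem_spanningSets ν x, eventually_ge_atTop ⌈‖g x‖⌉₊] with n hx hn
      simpa [h, hx] using Nat.ceil_le.1 hn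
  rw [← eLpNorm_norm]
  exact Lp.eLpNorm_le_of_ae_tendsto (Eventually.of_forall hbound)
    (fun n => (hhm n).aestronglyMeasurable) (ae_of_all _ htendsto)

theorem eLpNorm_le_of_forall_lintegral_mul_le [SigmaFinite ν] [p.HolderConjugate q]
    (hp : p ≠ ∞) (hg : Measurable g)
    (hC : ∀ f : α → ℝ, Measurable f → eLpNorm f p ν < ∞ →
      ∫⁻ x, ‖g x‖ₑ * ‖f x‖ₑ ∂ν ≤ C * eLpNorm f p ν) :
    eLpNorm g q ν ≤ C := by
  rcases eq_or_ne q ∞ with rfl | hq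
  · obtain rfl : p = 1 := (ENNReal.HolderTriple.unique p ∞ 1 p).symm
    refine eLpNorm_top_le_of_forall_setLIntegral_le hg fun s hs hνs => ?_
    have hnorm : eLpNorm (s.indicator fun _ => (1 : ℝ)) 1 ν = ν s := by
      simp [eLpNorm_indicator_const hs one_ne_zero one_ne_top]
    have hint :
        ∫⁻ x, ‖g x‖ₑ * ‖s.indicator (fun _ => (1 : ℝ)) x‖ₑ ∂ν = ∫⁻ x in s, ‖g x‖ₑ ∂ν := by
      rw [← lintegral_indicator hs]
      congr 1 with x
      by_cases hx : x ∈ s <;> simp [hx]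
    have htest := hC _ (measurable_const.indicator hs) (by rwa [hnorm])
    rwa [hint, hnorm] at htest
  · exact eLpNorm_le_of_forall_lintegral_mul_le_of_ne_top hp hq hg hC

end Duality

theorem absolutelyContinuous_and_Aconst_le_of_embedding_general
    (μ ν : Measure α) [SigmaFinite μ] [SigmaFinite ν]
    (p q : ℝ≥0∞) (hp' : p ≠ ∞) (hpq : 1 / p + 1 / q = 1)
    (C : ℝ≥0∞)
    (hemb : ∀ f : α → ℝ, Measurable f → eLpNorm f p ν < ∞ →
      ∫⁻ t in {t : ℝ | 0 < t ∧ ENNReal.ofReal t < min (μ univ) 1}, niRearr μ f t ≤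
        C * eLpNorm f p ν) :
    μ ≪ ν ∧ Aconst μ ν q ≤ C := by
  have hlayer : ∀ f : α → ℝ, Measurable f → eLpNorm f p ν < ∞ →
      ∫⁻ s in Ioi 0, min (min (μ univ) 1) (distrib μ f s) ≤ C * eLpNorm f p ν := fun f hf hfp =>
    (lintegral_min_distrib_le_lintegral_niRearr μ f (min_lt_of_right_lt one_lt_top).ne).trans
      (hemb f hf hfp)
  have hac : μ ≪ ν := absolutelyContinuous_of_lintegral_min_distrib_le hlayer
  have : p.HolderConjugate q := ENNReal.holderConjugate_iff.2 (by simpa only [one_div] using hpq)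
  refine ⟨hac, iSup_le fun E => iSup₂_le fun hE hE1 => ?_⟩
  refine eLpNorm_le_of_forall_lintegral_mul_le hp'
    (Measure.measurable_rnDeriv μ ν).ennreal_toReal fun f hf hfp => ?_
  rw [← eLpNorm_indicator_eq_eLpNorm_restrict hE] at hfp ⊢
  calc ∫⁻ x in E, ‖(μ.rnDeriv ν x).toReal‖ₑ * ‖f x‖ₑ ∂ν
      ≤ ∫⁻ x in E, μ.rnDeriv ν x * ‖f x‖ₑ ∂ν :=
        lintegral_mono fun x => mul_le_mul_left
          ((Real.enorm_eq_ofReal ENNReal.toReal_nonneg).trans_le ENNReal.ofReal_toReal_le) _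
    _ = ∫⁻ x in E, ‖f x‖ₑ ∂μ := setLIntegral_rnDeriv_mul hac hf.enorm.aemeasurable hE
    _ ≤ ∫⁻ s in Ioi 0, min (min (μ univ) 1) (distrib μ (E.indicator f) s) :=
        setLIntegral_enorm_le_lintegral_min_distrib_indicator μ hf hE1
    _ ≤ C * eLpNorm (E.indicator f) p ν := hlayer _ (hf.indicator hE) hfp

/-- If `L^p(R, ν) ↪ (L^1 + L^∞)(R, μ)` with norm at most `C < ∞`, then `μ ≪ ν` and
`A = sup_{μ(E) ≤ 1} ‖dμ/dν‖_{L^{p'}(E, ν)} ≤ C`. -/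
theorem absolutelyContinuous_and_Aconst_le_of_embedding
    (μ ν : Measure α) [SigmaFinite μ] [SigmaFinite ν]
    (hμna : Nonatomic μ) (hνna : Nonatomic ν)
    (p q : ℝ≥0∞) (hp : 1 ≤ p) (hp' : p ≠ ∞) (hpq : 1 / p + 1 / q = 1)
    (C : ℝ≥0∞) (hC : C ≠ ∞)
    (hemb : ∀ f : α → ℝ, Measurable f → eLpNorm f p ν < ∞ →
      ∫⁻ t in {t : ℝ | 0 < t ∧ ENNReal.ofReal t < min (μ univ) 1}, niRearr μ f t ≤
        C * eLpNorm f p ν) :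
    μ ≪ ν ∧ Aconst μ ν q ≤ C :=
  absolutelyContinuous_and_Aconst_le_of_embedding_general μ ν p q hp' hpq C hemb
end

section
/- Let μ, ν be nonatomic σ-finite measures on R over the same σ-algebra and let p ∈ [1, ∞). Suppose μ is absolutely continuous with respect to ν and A := sup_{E ⊂ R, μ(E) ≤ 1} ( ∫_E (dμ/dν)^{p'} dν )^{1/p'} < ∞ (supremum over μ-measurable sets E with μ(E) ≤ 1; usual modification for p = 1). Then for every ν-measurable function f with ∫_R |f|^p dν < ∞, one has ∫_0^{min{μ(R),1}} f^*(t) dt ≤ A (∫_R |f|^p dν)^{1/p}, where f^* is the nonincreasing rearrangement of f with respect to μ; moreover, A is the optimal (smallest) such constant. -/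
open MeasureTheory Set Filter Topology ENNReal

variable {α : Type*} [MeasurableSpace α]

/-!
By Tonelli, `∫₀^m f^*` equals `∫₀^∞ min(m, μ_f(s)) ds`. For a nonatomic measure this is the
supremum of `∫_E |f| dμ` over sets with `μ(E) ≤ m`: by Sierpiński's theorem the superlevel set
`{|f| > c}` at the critical level `c = f^*(m)` can be enlarged to a set of measure exactly `m`
lying above level `c - δ`, which loses only the band of levels `(c - δ, c]`. Writing
`∫_E |f| dμ = ∫_E |f| (dμ/dν) dν`, Hölder's inequality bounds this by `A ‖f‖_p`. Conversely, the
extremal functions of Hölder's inequality on `E` (`(dμ/dν)^{p'-1}`, or for `p = 1` the indicator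
of a set where `dμ/dν` is close to its essential supremum) show that no smaller constant works.
-/

lemma volume_setOf_pos_ofReal_lt (a : ℝ≥0∞) :
    volume {t : ℝ | 0 < t ∧ ENNReal.ofReal t < a} = a := by
  rcases eq_or_ne a ∞ with rfl | ha
  · simp only [ENNReal.ofReal_lt_top, and_true]
    exact Real.volume_Ioi
  · have : {t : ℝ | 0 < t ∧ ENNReal.ofReal t < a} = Ioo 0 a.toReal := by
      ext t
      simp only [mem_ofPred_eq, mem_Ioo, and_congr_right_iff]
      exact fun ht => ENNReal.ofReal_lt_iff_lt_toReal ht.le ha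
    rw [this, Real.volume_Ioo, sub_zero, ENNReal.ofReal_toReal ha]

lemma volume_setOf_pos_ofReal_le (a : ℝ≥0∞) :
    volume {t : ℝ | 0 < t ∧ ENNReal.ofReal t ≤ a} = a := by
  rcases eq_or_ne a ∞ with rfl | ha
  · simp only [le_top, and_true]
    exact Real.volume_Ioi
  · have : {t : ℝ | 0 < t ∧ ENNReal.ofReal t ≤ a} = Ioc 0 a.toReal := by
      ext t
      simp only [mem_ofPred_eq, mem_Ioc, and_congr_right_iff]
      exact fun _ => ENNReal.ofReal_le_iff_le_toReal ha
    rw [this, Real.volume_Ioc, sub_zero, ENNReal.ofReal_toReal ha]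

lemma niRearr_eq_volume (μ : Measure α) (f : α → ℝ) (t : ℝ) :
    niRearr μ f t = volume {s : ℝ | 0 < s ∧ ENNReal.ofReal t < distrib μ f s} := by
  refine le_antisymm ?_ ?_
  · calc niRearr μ f t = volume {s : ℝ | 0 < s ∧ ENNReal.ofReal s < niRearr μ f t} :=
          (volume_setOf_pos_ofReal_lt _).symm
      _ ≤ _ := by
          refine measure_mono fun s ⟨hs, hlt⟩ => ⟨hs, not_le.mp fun hle => hlt.not_ge ?_⟩
          exact sInf_le ⟨s, hs, hle, rfl⟩
  · calc _ ≤ volume {s : ℝ | 0 < s ∧ ENNReal.ofReal s ≤ niRearr μ f t} := by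
          refine measure_mono fun s ⟨hs, hlt⟩ => ⟨hs, le_sInf ?_⟩
          rintro _ ⟨u, -, hu, rfl⟩
          refine ENNReal.ofReal_le_ofReal (le_of_not_ge fun hus => ?_)
          exact (hu.trans_lt hlt).not_ge (distrib_antitone μ f hus)
      _ = niRearr μ f t := volume_setOf_pos_ofReal_le _

lemma lintegral_niRearr_eq_lintegral_min_distrib (μ : Measure α) (f : α → ℝ) (m : ℝ≥0∞) :
    ∫⁻ t in {t : ℝ | 0 < t ∧ ENNReal.ofReal t < m}, niRearr μ f t
      = ∫⁻ s in Ioi 0, min m (distrib μ f s) := by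
  set T := {t : ℝ | 0 < t ∧ ENNReal.ofReal t < m}
  set W := {z : ℝ × ℝ | 0 < z.2 ∧ ENNReal.ofReal z.1 < distrib μ f z.2}
  have hW : MeasurableSet W :=
    (measurable_snd measurableSet_Ioi).inter <| measurableSet_lt
      (ENNReal.measurable_ofReal.comp measurable_fst)
      ((distrib_antitone μ f).measurable.comp measurable_snd)
  have hslice (s : ℝ) : (volume.restrict T) ((fun t => (t, s)) ⁻¹' W)
      = (Ioi 0).indicator (fun s => min m (distrib μ f s)) s := by
    rw [Measure.restrict_apply (measurable_prodMk_right hW)]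
    by_cases hs : 0 < s
    · rw [indicator_of_mem (mem_Ioi.mpr hs), ← volume_setOf_pos_ofReal_lt (min _ _)]
      congr 1
      ext t
      simp only [W, T, mem_inter_iff, mem_preimage, mem_ofPred_eq, lt_min_iff]
      tauto
    · simp [W, hs]
  calc ∫⁻ t in T, niRearr μ f t = ∫⁻ t, volume (Prod.mk t ⁻¹' W) ∂(volume.restrict T) := by
        simp_rw [niRearr_eq_volume]
        rfl
    _ = (volume.restrict T).prod volume W := (Measure.prod_apply hW).symm
    _ = ∫⁻ s, (volume.restrict T) ((fun t => (t, s)) ⁻¹' W) := Measure.prod_apply_symm hW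
    _ = ∫⁻ s in Ioi 0, min m (distrib μ f s) := by
        simp_rw [hslice]
        exact lintegral_indicator measurableSet_Ioi _

lemma lintegral_enorm_eq_lintegral_distrib (μ : Measure α) {f : α → ℝ}
    (hf : AEMeasurable f μ) :
    ∫⁻ x, ‖f x‖ₑ ∂μ = ∫⁻ s in Ioi 0, distrib μ f s := by
  simp_rw [Real.enorm_eq_ofReal_abs]
  exact lintegral_eq_lintegral_meas_lt μ (ae_of_all _ fun x => abs_nonneg (f x)) hf.abs

lemma setLIntegral_enorm_le_lintegral_min_distrib (μ : Measure α) {f : α → ℝ}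
    (hf : AEMeasurable f μ) {E : Set α} {m : ℝ≥0∞} (hEm : μ E ≤ m) :
    ∫⁻ x in E, ‖f x‖ₑ ∂μ ≤ ∫⁻ s in Ioi 0, min m (distrib μ f s) := by
  rw [lintegral_enorm_eq_lintegral_distrib _ hf.restrict]
  refine lintegral_mono fun s => le_min ?_ (Measure.restrict_le_self _)
  exact (measure_mono (subset_univ _)).trans ((Measure.restrict_apply_univ E).trans_le hEm)

lemma ENNReal.exists_mem_sSup_le_two_mul {s : Set ℝ≥0∞} (hs : s.Nonempty) (htop : sSup s ≠ ∞) :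
    ∃ x ∈ s, sSup s ≤ 2 * x := by
  rcases eq_or_ne (sSup s) 0 with h0 | h0
  · obtain ⟨x, hx⟩ := hs
    exact ⟨x, hx, h0.trans_le zero_le⟩
  · obtain ⟨x, hx, hlt⟩ := lt_sSup_iff.mp (ENNReal.half_lt_self h0 htop)
    refine ⟨x, hx, ?_⟩
    calc sSup s = 2 * (sSup s / 2) := (ENNReal.mul_div_cancel two_ne_zero ofNat_ne_top).symm
      _ ≤ 2 * x := by gcongr

lemma exists_half_maximal_extension (μ : Measure α) {B S : Set α} {r : ℝ≥0∞} (hS : μ S ≤ r)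
    (hr : r ≠ ∞) :
    ∃ G, (MeasurableSet G ∧ G ⊆ B \ S ∧ μ S + μ G ≤ r) ∧
      ∀ G', MeasurableSet G' ∧ G' ⊆ B \ S ∧ μ S + μ G' ≤ r → μ G' ≤ 2 * μ G := by
  set adm := {G | MeasurableSet G ∧ G ⊆ B \ S ∧ μ S + μ G ≤ r}
  have hbdd : sSup (μ '' adm) ≠ ∞ := by
    refine ne_top_of_le_ne_top hr (sSup_le ?_)
    rintro _ ⟨G', hG', rfl⟩
    exact le_add_self.trans hG'.2.2
  obtain ⟨_, ⟨G, hG, rfl⟩, hmax⟩ := ENNReal.exists_mem_sSup_le_two_mul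
    ⟨_, mem_image_of_mem μ (show ∅ ∈ adm from ⟨.empty, empty_subset _, by simpa⟩)⟩ hbdd
  exact ⟨G, hG, fun G' hG' => (le_sSup (mem_image_of_mem μ hG')).trans hmax⟩

namespace Nonatomic

variable {μ : Measure α}

lemma exists_subset_pos_le_half (hna : Nonatomic μ) {F : Set α} (hF : MeasurableSet F)
    (h0 : 0 < μ F) : ∃ G ⊆ F, MeasurableSet G ∧ 0 < μ G ∧ μ G ≤ μ F / 2 := by
  obtain ⟨G, hGF, hG, hG0, hGlt⟩ := hna F hF h0
  rcases le_total (μ G) (μ F / 2) with hle | hge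
  · exact ⟨G, hGF, hG, hG0, hle⟩
  · have hdiff : μ (F \ G) = μ F - μ G :=
      measure_sdiff hGF hG.nullMeasurableSet (hGlt.trans_le le_top).ne
    refine ⟨F \ G, sdiff_subset, hF.diff hG, hdiff ▸ tsub_pos_of_lt hGlt, ?_⟩
    rw [hdiff, tsub_le_iff_right]
    calc μ F = μ F / 2 + μ F / 2 := (ENNReal.add_halves _).symm
      _ ≤ μ F / 2 + μ G := by gcongr

lemma exists_subset_pos_le (hna : Nonatomic μ) {B : Set α} (hB : MeasurableSet B)
    (h0 : 0 < μ B) {ε : ℝ≥0∞} (hε : 0 < ε) : ∃ F ⊆ B, MeasurableSet F ∧ 0 < μ F ∧ μ F ≤ ε := by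
  obtain ⟨G, hGB, hG, hG0, hGlt⟩ := hna B hB h0
  have hGtop : μ G ≠ ∞ := (hGlt.trans_le le_top).ne
  have halving (n : ℕ) : ∃ F ⊆ G, MeasurableSet F ∧ 0 < μ F ∧ μ F ≤ 2⁻¹ ^ n * μ G := by
    induction n with
    | zero => exact ⟨G, subset_rfl, hG, hG0, by simp⟩
    | succ n ih =>
      obtain ⟨F, hFG, hF, hF0, hFle⟩ := ih
      obtain ⟨F', hF'F, hF', hF'0, hF'le⟩ := hna.exists_subset_pos_le_half hF hF0
      refine ⟨F', hF'F.trans hFG, hF', hF'0, hF'le.trans ?_⟩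
      rw [pow_succ, mul_right_comm, ← div_eq_mul_inv]
      gcongr
  obtain ⟨n, hn⟩ := ENNReal.exists_inv_two_pow_lt (ENNReal.div_pos hε.ne' hGtop).ne'
  obtain ⟨F, hFG, hF, hF0, hFle⟩ := halving n
  refine ⟨F, hFG.trans hGB, hF, hF0, hFle.trans ?_⟩
  calc 2⁻¹ ^ n * μ G ≤ ε / μ G * μ G := by gcongr
    _ = ε := ENNReal.div_mul_cancel hG0.ne' hGtop

/-- Sierpiński's theorem. The greedy construction adds at each step a set of at least half the
largest admissible measure; if it stopped short of `r`, a small set in the remainder would be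
admissible at every step, forcing infinitely many increments of a fixed size. -/
lemma exists_subset_measure_eq (hna : Nonatomic μ) {B : Set α} (hB : MeasurableSet B)
    {r : ℝ≥0∞} (hrB : r ≤ μ B) : ∃ F ⊆ B, MeasurableSet F ∧ μ F = r := by
  rcases eq_or_ne r ∞ with rfl | hr
  · exact ⟨B, subset_rfl, hB, top_le_iff.mp hrB⟩
  let Adm (S G : Set α) : Prop := MeasurableSet G ∧ G ⊆ B \ S ∧ μ S + μ G ≤ r
  have greedy (S : Set α) (hS : μ S ≤ r) : ∃ G, Adm S G ∧ ∀ G', Adm S G' → μ G' ≤ 2 * μ G :=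
    exists_half_maximal_extension μ hS hr
  choose! G hG hGmax using greedy
  let A : ℕ → Set α := fun n => Nat.rec ∅ (fun _ S => S ∪ G S) n
  have hA (n : ℕ) : MeasurableSet (A n) ∧ A n ⊆ B ∧ μ (A n) ≤ r := by
    induction n with
    | zero => exact ⟨.empty, empty_subset _, by simp [A]⟩
    | succ n ih =>
      obtain ⟨hmeas, hsub, hle⟩ := ih
      obtain ⟨hGm, hGsub, hGle⟩ := hG (A n) hle
      exact ⟨hmeas.union hGm, union_subset hsub (hGsub.trans sdiff_subset),
        (measure_union_le _ _).trans hGle⟩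
  have hA_succ (n : ℕ) : μ (A (n + 1)) = μ (A n) + μ (G (A n)) :=
    measure_union (disjoint_sdiff_right.mono_right (hG _ (hA n).2.2).2.1) (hG _ (hA n).2.2).1
  have hA_mono : Monotone A := monotone_nat_of_le_succ fun n => subset_union_left
  have hA_lim : μ (⋃ n, A n) ≤ r := by
    rw [hA_mono.measure_iUnion]
    exact iSup_le fun n => (hA n).2.2
  refine ⟨⋃ n, A n, iUnion_subset fun n => (hA n).2.1, .iUnion fun n => (hA n).1,
    hA_lim.antisymm (not_lt.mp fun hlt => ?_)⟩
  obtain ⟨D, hDsub, hD, hD0, hDle⟩ := hna.exists_subset_pos_le (hB.diff (.iUnion fun n => (hA n).1))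
    ((tsub_pos_of_lt (hlt.trans_le hrB)).trans_le le_measure_sdiff) (tsub_pos_of_lt hlt)
  have hD_adm (n : ℕ) : Adm (A n) D := by
    refine ⟨hD, hDsub.trans (sdiff_subset_sdiff_right (subset_iUnion A n)), ?_⟩
    calc μ (A n) + μ D ≤ μ (⋃ n, A n) + (r - μ (⋃ n, A n)) :=
          add_le_add (measure_mono (subset_iUnion A n)) hDle
      _ = r := add_tsub_cancel_of_le hA_lim
  have hgrow (n : ℕ) : n * μ D ≤ 2 * μ (A n) := by
    induction n with
    | zero => simp
    | succ n ih =>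
      rw [hA_succ, mul_add, Nat.cast_succ, add_mul, one_mul]
      exact add_le_add ih (hGmax _ (hA n).2.2 D (hD_adm n))
  obtain ⟨n, hn⟩ :=
    ENNReal.exists_nat_mul_gt hD0.ne' (ENNReal.mul_ne_top (ENNReal.ofNat_ne_top (n := 2)) hr)
  exact (hn.trans_le (hgrow n)).not_ge (by gcongr; exact (hA n).2.2)

lemma exists_between_measure_eq (hna : Nonatomic μ) {H K : Set α} (hH : MeasurableSet H)
    (hK : MeasurableSet K) (hHK : H ⊆ K) {m : ℝ≥0∞} (hHm : μ H ≤ m) (hmK : m ≤ μ K) :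
    ∃ E, H ⊆ E ∧ E ⊆ K ∧ MeasurableSet E ∧ μ E = m := by
  obtain ⟨F, hFsub, hF, hFm⟩ := hna.exists_subset_measure_eq (hK.diff hH) (r := m - μ H)
    ((tsub_le_tsub_right hmK _).trans le_measure_sdiff)
  refine ⟨H ∪ F, subset_union_left, union_subset hHK (hFsub.trans sdiff_subset), hH.union hF, ?_⟩
  rw [measure_union (disjoint_sdiff_right.mono_right hFsub) hF, hFm, add_tsub_cancel_of_le hHm]

end Nonatomic

section Rearrangement

variable {μ : Measure α} {f : α → ℝ} {m M : ℝ≥0∞}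

lemma measurableSet_lt_abs (hf : Measurable f) (s : ℝ) : MeasurableSet {x | s < |f x|} :=
  measurableSet_lt measurable_const hf.abs

lemma min_distrib_le_distrib_restrict_add_indicator {E : Set α} {b c : ℝ}
    (hcE : {x | c < |f x|} ⊆ E) (hEb : E ⊆ {x | b < |f x|}) (hEm : μ E = m) (s : ℝ) :
    min m (distrib μ f s) ≤ distrib (μ.restrict E) f s + (Ioc b c).indicator (fun _ => m) s := by
  by_cases hs : s ∈ Ioc b c
  · rw [indicator_of_mem hs]
    exact (min_le_left _ _).trans le_add_self
  rcases not_and_or.mp hs with hbs | hsc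
  · have hEs : E ⊆ {x | s < |f x|} := hEb.trans fun x hx => (not_lt.mp hbs).trans_lt hx
    rw [show distrib (μ.restrict E) f s = m from (Measure.restrict_apply_superset hEs).trans hEm]
    exact (min_le_left _ _).trans le_self_add
  · have hsE : {x | s < |f x|} ⊆ E := fun x hx => hcE ((not_le.mp hsc).trans hx)
    rw [show distrib (μ.restrict E) f s = distrib μ f s from Measure.restrict_eq_self μ hsE]
    exact (min_le_right _ _).trans le_self_add

lemma lintegral_min_distrib_le_of_threshold (hna : Nonatomic μ) (hf : Measurable f)
    (hmtop : m ≠ ∞) (hM : ∀ E, MeasurableSet E → μ E = m → ∫⁻ x in E, ‖f x‖ₑ ∂μ ≤ M) {c : ℝ}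
    (hc : μ {x | c < |f x|} ≤ m) (hbc : ∀ b < c, m ≤ μ {x | b < |f x|}) :
    ∫⁻ s in Ioi 0, min m (distrib μ f s) ≤ M := by
  have hδ (δ : ℝ) (hδ : 0 < δ) :
      ∫⁻ s in Ioi 0, min m (distrib μ f s) ≤ M + m * ENNReal.ofReal δ := by
    have hb : c - δ < c := sub_lt_self c hδ
    obtain ⟨E, hcE, hEb, hE, hEm⟩ := hna.exists_between_measure_eq (measurableSet_lt_abs hf c)
      (measurableSet_lt_abs hf (c - δ)) (fun x hx => hb.trans hx) hc (hbc _ hb)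
    calc ∫⁻ s in Ioi 0, min m (distrib μ f s)
        ≤ ∫⁻ s in Ioi 0, distrib (μ.restrict E) f s + (Ioc (c - δ) c).indicator (fun _ => m) s :=
          lintegral_mono fun s => min_distrib_le_distrib_restrict_add_indicator hcE hEb hEm s
      _ ≤ (∫⁻ s in Ioi 0, distrib (μ.restrict E) f s) +
            ∫⁻ s, (Ioc (c - δ) c).indicator (fun _ => m) s := by
          rw [lintegral_add_right _ (measurable_const.indicator measurableSet_Ioc)]
          exact add_le_add_right (setLIntegral_le_lintegral _ _) _
      _ = ∫⁻ x in E, ‖f x‖ₑ ∂μ + m * ENNReal.ofReal δ := by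
          rw [← lintegral_enorm_eq_lintegral_distrib (μ.restrict E) hf.aemeasurable,
            lintegral_indicator_const measurableSet_Ioc, Real.volume_Ioc, sub_sub_cancel c δ]
      _ ≤ M + m * ENNReal.ofReal δ := by gcongr; exact hM E hE hEm
  have hlim : Tendsto (fun δ : ℝ => M + m * ENNReal.ofReal δ) (𝓝[>] 0) (𝓝 M) := by
    have hcont : Continuous fun δ : ℝ => M + m * ENNReal.ofReal δ :=
      continuous_const.add ((ENNReal.continuous_const_mul hmtop).comp ENNReal.continuous_ofReal)
    simpa using (hcont.tendsto 0).mono_left nhdsWithin_le_nhds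
  exact ge_of_tendsto hlim (eventually_nhdsWithin_of_forall hδ)

lemma lintegral_min_distrib_le_of_forall_lt_distrib (hna : Nonatomic μ) (hf : Measurable f)
    (hM : ∀ E, MeasurableSet E → μ E = m → ∫⁻ x in E, ‖f x‖ₑ ∂μ ≤ M)
    (hD : ∀ s, 0 < s → m < distrib μ f s) :
    ∫⁻ s in Ioi 0, min m (distrib μ f s) ≤ M := by
  rcases eq_or_ne m 0 with rfl | hm0
  · simp
  suffices M = ∞ by simp [this]
  by_contra hMtop
  obtain ⟨n, hn⟩ := ENNReal.exists_nat_mul_gt hm0 hMtop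
  obtain ⟨E, hEsub, hE, hEm⟩ :=
    hna.exists_subset_measure_eq (measurableSet_lt_abs hf (n + 1)) (hD (n + 1) (by positivity)).le
  refine hn.not_ge ?_
  calc n * m = ∫⁻ _ in E, (n : ℝ≥0∞) ∂μ := by rw [setLIntegral_const, hEm]
    _ ≤ ∫⁻ x in E, ‖f x‖ₑ ∂μ := by
        refine setLIntegral_mono' hE fun x hx => ?_
        rw [Real.enorm_eq_ofReal_abs, ← ENNReal.ofReal_natCast]
        exact ENNReal.ofReal_le_ofReal ((lt_add_one _).trans (hEsub hx)).le
    _ ≤ M := hM E hE hEm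

/-- The critical level is `c = inf {s > 0 | distrib μ f s ≤ m}`, i.e. `f^*(m)`. -/
lemma lintegral_min_distrib_le (hna : Nonatomic μ) (hf : Measurable f) (hm : m ≤ μ univ)
    (hmtop : m ≠ ∞) (hM : ∀ E, MeasurableSet E → μ E = m → ∫⁻ x in E, ‖f x‖ₑ ∂μ ≤ M) :
    ∫⁻ s in Ioi 0, min m (distrib μ f s) ≤ M := by
  set U := {s : ℝ | 0 < s ∧ distrib μ f s ≤ m}
  rcases U.eq_empty_or_nonempty with hU | hU
  · exact lintegral_min_distrib_le_of_forall_lt_distrib hna hf hM fun s hs =>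
      not_le.mp fun hle => notMem_empty s (hU.subset ⟨hs, hle⟩)
  have hbdd : BddBelow U := ⟨0, fun s hs => hs.1.le⟩
  refine lintegral_min_distrib_le_of_threshold hna hf hmtop hM (c := sInf U) ?_ fun b hb => ?_
  · obtain ⟨u, hu_anti, hu_lim, hu_mem⟩ := exists_seq_tendsto_sInf hU hbdd
    have hunion : {x | sInf U < |f x|} = ⋃ n, {x | u n < |f x|} := by
      ext x
      simp only [mem_ofPred_eq, mem_iUnion]
      refine ⟨fun hx => (hu_lim.eventually (gt_mem_nhds hx)).exists, fun ⟨n, hn⟩ => ?_⟩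
      exact (csInf_le hbdd (hu_mem n)).trans_lt hn
    have hmono : Monotone fun n => {x | u n < |f x|} :=
      fun i j hij x hx => (hu_anti hij).trans_lt hx
    rw [hunion, hmono.measure_iUnion]
    exact iSup_le fun n => (hu_mem n).2
  · rcases lt_or_ge b 0 with hb0 | hb0
    · simpa [fun x => hb0.trans_le (abs_nonneg (f x))] using hm
    · have hs : (b + sInf U) / 2 ∉ U := notMem_of_lt_csInf (by linarith) hbdd
      have hpos : 0 < (b + sInf U) / 2 := by linarith
      exact (not_le.mp fun h => hs ⟨hpos, h⟩).le.trans (distrib_antitone μ f (by linarith))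

theorem lintegral_niRearr_eq_iSup_setLIntegral (hna : Nonatomic μ) (hf : Measurable f)
    (hm : m ≤ μ univ) (hmtop : m ≠ ∞) :
    ∫⁻ t in {t : ℝ | 0 < t ∧ ENNReal.ofReal t < m}, niRearr μ f t
      = ⨆ (E : Set α) (_ : MeasurableSet E) (_ : μ E ≤ m), ∫⁻ x in E, ‖f x‖ₑ ∂μ := by
  rw [lintegral_niRearr_eq_lintegral_min_distrib]
  refine le_antisymm (lintegral_min_distrib_le hna hf hm hmtop fun E hE hEm => ?_) ?_
  · exact le_iSup₂_of_le E hE (le_iSup_of_le hEm.le le_rfl)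
  · exact iSup₂_le fun E _ => iSup_le fun hEm =>
      setLIntegral_enorm_le_lintegral_min_distrib μ hf.aemeasurable hEm

end Rearrangement

section Duality

variable {ν : Measure α} {p q : ℝ≥0∞}

lemma eLpNorm_top_le_of_forall_lintegral_enorm_mul_le [SigmaFinite ν] {g : α → ℝ}
    (hg : Measurable g) {C : ℝ≥0∞}
    (hC : ∀ f : α → ℝ, Measurable f → eLpNorm f 1 ν < ∞ →
      ∫⁻ x, ‖f x‖ₑ * ‖g x‖ₑ ∂ν ≤ C * eLpNorm f 1 ν) :
    eLpNorm g ∞ ν ≤ C := by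
  rw [eLpNorm_exponent_top]
  by_contra! hlt
  obtain ⟨b, hCb, hb⟩ := exists_between hlt
  have hlevel : ν {x | b < ‖g x‖ₑ} ≠ 0 := fun h0 =>
    hb.not_ge (essSup_le_of_ae_le _ ((measure_eq_zero_iff_ae_notMem.mp h0).mono
      fun _ hx => not_lt.mp hx))
  obtain ⟨S, hS, hSsub, hS0, hStop⟩ := Measure.exists_subset_measure_lt_top
    (measurableSet_lt measurable_const hg.enorm) (pos_iff_ne_zero.mpr hlevel)
  have hnorm : eLpNorm (S.indicator fun _ => (1 : ℝ)) 1 ν = ν S := by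
    rw [eLpNorm_one_eq_lintegral_enorm, ← lintegral_indicator_one hS]
    congr with x
    by_cases hx : x ∈ S <;> simp [hx]
  have hpair : b * ν S ≤ C * ν S :=
    calc b * ν S = ∫⁻ _ in S, b ∂ν := by rw [setLIntegral_const, mul_comm]
      _ ≤ ∫⁻ x in S, ‖g x‖ₑ ∂ν := setLIntegral_mono' hS fun x hx => (hSsub hx).le
      _ = ∫⁻ x, ‖S.indicator (fun _ => (1 : ℝ)) x‖ₑ * ‖g x‖ₑ ∂ν := by
          rw [← lintegral_indicator hS]
          congr with x
          by_cases hx : x ∈ S <;> simp [hx]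
      _ ≤ C * ν S := hnorm ▸ hC _ (measurable_const.indicator hS) (hnorm ▸ hStop)
  exact hCb.not_ge ((ENNReal.mul_le_mul_iff_left hS0.ne' hStop.ne).mp hpair)

/-- The extremal test function is `‖g‖ ^ (q - 1)`. -/
lemma eLpNorm_le_of_forall_lintegral_enorm_mul_le_of_ne_top [HolderConjugate p q]
    (hp : p ≠ ∞) (hq : q ≠ ∞) {g : α → ℝ} (hg : Measurable g) (hgq : eLpNorm g q ν ≠ ∞)
    {C : ℝ≥0∞}
    (hC : ∀ f : α → ℝ, Measurable f → eLpNorm f p ν < ∞ →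
      ∫⁻ x, ‖f x‖ₑ * ‖g x‖ₑ ∂ν ≤ C * eLpNorm f p ν) :
    eLpNorm g q ν ≤ C := by
  have hpq : p.toReal.HolderConjugate q.toReal := HolderConjugate.toReal_of_ne_top hp hq
  set r := q.toReal
  set N := eLpNorm g q ν
  rcases eq_or_ne N 0 with hN0 | hN0
  · exact hN0 ▸ zero_le
  have hr1 : 0 < r - 1 := sub_pos.mpr hpq.symm.lt
  have hN : N = eLpNorm' g r ν := eLpNorm_eq_eLpNorm' (HolderConjugate.ne_zero q p) hq
  have hnorm : eLpNorm (fun x => ‖g x‖ ^ (r - 1)) p ν = N ^ (r - 1) := by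
    rw [eLpNorm_norm_rpow g hr1, ← ENNReal.ofReal_toReal hp, ← ENNReal.ofReal_mul toReal_nonneg,
      mul_comm, hpq.symm.sub_one_mul_conj, ENNReal.ofReal_toReal hq]
  have hsplit (x : ℝ≥0∞) : x ^ (r - 1) * x = x ^ r := by
    calc x ^ (r - 1) * x = x ^ (r - 1) * x ^ (1 : ℝ) := by rw [ENNReal.rpow_one]
      _ = x ^ r := by rw [← ENNReal.rpow_add_of_nonneg _ _ hr1.le zero_le_one, sub_add_cancel]
  have hpair : ∫⁻ x, ‖‖g x‖ ^ (r - 1)‖ₑ * ‖g x‖ₑ ∂ν = N ^ (r - 1) * N := by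
    calc ∫⁻ x, ‖‖g x‖ ^ (r - 1)‖ₑ * ‖g x‖ₑ ∂ν = ∫⁻ x, ‖g x‖ₑ ^ r ∂ν := by
          congr with x
          rw [Real.enorm_rpow_of_nonneg (norm_nonneg _) hr1.le, enorm_norm, hsplit]
      _ = N ^ (r - 1) * N := by
          rw [lintegral_rpow_enorm_eq_rpow_eLpNorm' hpq.symm.pos, ← hN, hsplit]
  have hbound := hC _ (hg.norm.pow_const _) (hnorm ▸ ENNReal.rpow_lt_top_of_nonneg hr1.le hgq)
  rw [hpair, hnorm, mul_comm C] at hbound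
  exact (ENNReal.mul_le_mul_iff_right (by simp [hN0, hgq]) (by simp [hN0, hgq])).mp hbound

theorem eLpNorm_le_of_forall_lintegral_enorm_mul_le [SigmaFinite ν] [HolderConjugate p q]
    (hp : p ≠ ∞) {g : α → ℝ} (hg : Measurable g) (hgq : eLpNorm g q ν ≠ ∞) {C : ℝ≥0∞}
    (hC : ∀ f : α → ℝ, Measurable f → eLpNorm f p ν < ∞ →
      ∫⁻ x, ‖f x‖ₑ * ‖g x‖ₑ ∂ν ≤ C * eLpNorm f p ν) :
    eLpNorm g q ν ≤ C := by
  rcases eq_or_ne p 1 with rfl | hp1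
  · obtain rfl : q = ∞ := (HolderConjugate.eq_top_iff_eq_one q 1).mpr rfl
    exact eLpNorm_top_le_of_forall_lintegral_enorm_mul_le hg hC
  · exact eLpNorm_le_of_forall_lintegral_enorm_mul_le_of_ne_top hp
      ((HolderConjugate.ne_top_iff_ne_one q p).mpr hp1) hg hgq hC

end Duality

lemma eLpNorm_rnDeriv_le_Aconst {μ ν : Measure α} (q : ℝ≥0∞) {E : Set α} (hE : MeasurableSet E)
    (hE1 : μ E ≤ 1) :
    eLpNorm (fun x => (μ.rnDeriv ν x).toReal) q (ν.restrict E) ≤ Aconst μ ν q :=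
  le_iSup₂_of_le E hE (le_iSup_of_le hE1 le_rfl)

section RadonNikodym

variable {μ ν : Measure α} [SigmaFinite μ] [SigmaFinite ν] {f : α → ℝ} {E : Set α}

lemma setLIntegral_enorm_eq_setLIntegral_enorm_mul_rnDeriv (hac : μ ≪ ν) (hf : Measurable f)
    (hE : MeasurableSet E) :
    ∫⁻ x in E, ‖f x‖ₑ ∂μ = ∫⁻ x in E, ‖f x‖ₑ * ‖(μ.rnDeriv ν x).toReal‖ₑ ∂ν := by
  rw [← setLIntegral_rnDeriv_mul hac hf.enorm.aemeasurable hE]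
  refine lintegral_congr_ae (ae_restrict_of_ae ?_)
  filter_upwards [Measure.rnDeriv_lt_top μ ν] with x hx
  rw [Real.enorm_toReal hx.ne, mul_comm]

lemma setLIntegral_enorm_le_eLpNorm_rnDeriv_mul_eLpNorm {p q : ℝ≥0∞} [HolderConjugate p q]
    (hac : μ ≪ ν) (hf : Measurable f) (hE : MeasurableSet E) :
    ∫⁻ x in E, ‖f x‖ₑ ∂μ
      ≤ eLpNorm (fun x => (μ.rnDeriv ν x).toReal) q (ν.restrict E) * eLpNorm f p ν := by
  set g := fun x => (μ.rnDeriv ν x).toReal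
  calc ∫⁻ x in E, ‖f x‖ₑ ∂μ = eLpNorm (fun x => f x * g x) 1 (ν.restrict E) := by
        rw [setLIntegral_enorm_eq_setLIntegral_enorm_mul_rnDeriv hac hf hE,
          eLpNorm_one_eq_lintegral_enorm]
        simp_rw [enorm_mul]
        rfl
    _ ≤ eLpNorm f p (ν.restrict E) * eLpNorm g q (ν.restrict E) := by
        simpa using eLpNorm_le_eLpNorm_mul_eLpNorm'_of_norm hf.aestronglyMeasurable
          (Measure.measurable_rnDeriv μ ν).ennreal_toReal.aestronglyMeasurable (· * ·) 1
          (ae_of_all _ fun x => by simp [norm_mul])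
    _ ≤ eLpNorm g q (ν.restrict E) * eLpNorm f p ν := by
        rw [mul_comm]
        gcongr
        exact Measure.restrict_le_self

lemma setLIntegral_enorm_le_Aconst_mul_eLpNorm {p q : ℝ≥0∞} [HolderConjugate p q] (hac : μ ≪ ν)
    (hf : Measurable f) (hE : MeasurableSet E) (hE1 : μ E ≤ 1) :
    ∫⁻ x in E, ‖f x‖ₑ ∂μ ≤ Aconst μ ν q * eLpNorm f p ν :=
  (setLIntegral_enorm_le_eLpNorm_rnDeriv_mul_eLpNorm hac hf hE).trans
    (by gcongr; exact eLpNorm_rnDeriv_le_Aconst q hE hE1)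

end RadonNikodym

theorem embedding_of_absolutelyContinuous_and_Aconst_general
    (μ ν : Measure α) [SigmaFinite μ] [SigmaFinite ν]
    (hμna : Nonatomic μ)
    (p q : ℝ≥0∞) (hp' : p ≠ ∞) (hpq : 1 / p + 1 / q = 1)
    (hac : μ ≪ ν) (hA : Aconst μ ν q ≠ ∞) :
    (∀ f : α → ℝ, Measurable f → eLpNorm f p ν < ∞ →
      ∫⁻ t in {t : ℝ | 0 < t ∧ ENNReal.ofReal t < min (μ univ) 1}, niRearr μ f t ≤
        Aconst μ ν q * eLpNorm f p ν) ∧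
      ∀ C : ℝ≥0∞,
        (∀ f : α → ℝ, Measurable f → eLpNorm f p ν < ∞ →
          ∫⁻ t in {t : ℝ | 0 < t ∧ ENNReal.ofReal t < min (μ univ) 1}, niRearr μ f t ≤
            C * eLpNorm f p ν) →
        Aconst μ ν q ≤ C := by
  have : HolderConjugate p q := holderConjugate_iff.mpr (by simpa only [one_div] using hpq)
  have hm : min (μ univ) 1 ≤ μ univ := min_le_left _ _
  have hmtop : min (μ univ) 1 ≠ ∞ := ((min_le_right _ _).trans_lt one_lt_top).ne
  have hsmall (E : Set α) : μ E ≤ min (μ univ) 1 ↔ μ E ≤ 1 := by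
    simp [measure_mono (subset_univ E)]
  refine ⟨fun f hf _ => ?_, fun C hC => iSup₂_le fun E hE => iSup_le fun hE1 => ?_⟩
  · rw [lintegral_niRearr_eq_iSup_setLIntegral hμna hf hm hmtop]
    exact iSup₂_le fun E hE => iSup_le fun hEm =>
      setLIntegral_enorm_le_Aconst_mul_eLpNorm hac hf hE ((hsmall E).mp hEm)
  · refine eLpNorm_le_of_forall_lintegral_enorm_mul_le hp'
      (Measure.measurable_rnDeriv μ ν).ennreal_toReal
      (ne_top_of_le_ne_top hA (eLpNorm_rnDeriv_le_Aconst q hE hE1)) fun f hf hfp => ?_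
    rw [← eLpNorm_indicator_eq_eLpNorm_restrict hE] at hfp ⊢
    calc ∫⁻ x in E, ‖f x‖ₑ * ‖(μ.rnDeriv ν x).toReal‖ₑ ∂ν
        = ∫⁻ x in E, ‖E.indicator f x‖ₑ ∂μ := by
          rw [← setLIntegral_enorm_eq_setLIntegral_enorm_mul_rnDeriv hac hf hE]
          exact setLIntegral_congr_fun hE fun x hx => by rw [indicator_of_mem hx]
      _ ≤ ∫⁻ t in {t : ℝ | 0 < t ∧ ENNReal.ofReal t < min (μ univ) 1},
            niRearr μ (E.indicator f) t := by
          rw [lintegral_niRearr_eq_iSup_setLIntegral hμna (hf.indicator hE) hm hmtop]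
          exact le_iSup₂_of_le E hE (le_iSup_of_le ((hsmall E).mpr hE1) le_rfl)
      _ ≤ C * eLpNorm (E.indicator f) p ν := hC _ (hf.indicator hE) hfp

/-- If `μ ≪ ν` and `A = sup_{μ(E) ≤ 1} ‖dμ/dν‖_{L^{p'}(E, ν)} < ∞`, then
`L^p(R, ν) ↪ (L^1 + L^∞)(R, μ)` with norm at most `A`; moreover `A` is the optimal constant. -/
theorem embedding_of_absolutelyContinuous_and_Aconst
    (μ ν : Measure α) [SigmaFinite μ] [SigmaFinite ν]
    (hμna : Nonatomic μ) (hνna : Nonatomic ν)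
    (p q : ℝ≥0∞) (hp : 1 ≤ p) (hp' : p ≠ ∞) (hpq : 1 / p + 1 / q = 1)
    (hac : μ ≪ ν) (hA : Aconst μ ν q ≠ ∞) :
    (∀ f : α → ℝ, Measurable f → eLpNorm f p ν < ∞ →
      ∫⁻ t in {t : ℝ | 0 < t ∧ ENNReal.ofReal t < min (μ univ) 1}, niRearr μ f t ≤
        Aconst μ ν q * eLpNorm f p ν) ∧
      ∀ C : ℝ≥0∞,
        (∀ f : α → ℝ, Measurable f → eLpNorm f p ν < ∞ →
          ∫⁻ t in {t : ℝ | 0 < t ∧ ENNReal.ofReal t < min (μ univ) 1}, niRearr μ f t ≤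
            C * eLpNorm f p ν) →
        Aconst μ ν q ≤ C :=
  embedding_of_absolutelyContinuous_and_Aconst_general μ ν hμna p q hp' hpq hac hA
end

section
/- Let (R, μ) be a σ-finite nonatomic measure space, p ∈ (0, ∞), and v : R → [0, ∞) a μ-measurable function whose nondecreasing rearrangement v_* (with respect to μ) is identically zero. Then for every μ-measurable g ≥ 0 with g^*(t) < ∞ for every t ∈ (0, ∞) and every ε > 0, there exists a μ-measurable function f with f^* = g^* and ( ∫_R |f|^p v dμ )^{1/p} ≤ ε. -/
open MeasureTheory Set Filter Topology ENNReal

variable {α : Type*} [MeasurableSpace α]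

/-!
Since `v_* ≡ 0`, every sublevel set `{|v| < δ}` has infinite measure. Nonatomicity (Sierpiński's
theorem, applied along successive dyadic refinements) then yields disjoint pieces
`D k ⊆ {|v| < δ k}`, `k ∈ ℤ`, and a map `T` carrying `μ` on `D k` to Lebesgue measure on
`[2 ^ k, 2 ^ (k + 1))`. The function `f = g^* ∘ T` on `⋃ k, D k`, zero elsewhere, has the
distribution function of `g^*` on `(0, ∞)`, which is that of `g`. On `D k` we have
`f ≤ g^*(2 ^ k)` and `|v| < δ k`, so `∫ |f|^p v ≤ ∑ g^*(2 ^ k)^p δ k 2 ^ k`, which is at most `ε^p`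
for small enough `δ k`.
-/

lemma volume_setOf_ofReal_lt (c : ℝ≥0∞) :
    volume {u ∈ Ioi (0 : ℝ) | ENNReal.ofReal u < c} = c := by
  rcases eq_or_ne c ∞ with rfl | hc
  · simp only [ENNReal.ofReal_lt_top, and_true, ofPred_mem_eq, Real.volume_Ioi]
  · have : {u ∈ Ioi (0 : ℝ) | ENNReal.ofReal u < c} = Ioo 0 c.toReal := by
      ext u
      simp only [mem_ofPred_eq, mem_Ioi, mem_Ioo, and_congr_right_iff]
      exact fun hu => ENNReal.ofReal_lt_iff_lt_toReal hu.le hc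
    rw [this, Real.volume_Ioo, sub_zero, ENNReal.ofReal_toReal hc]

lemma exists_dyadic_btwn {m x y : ℝ} (hm : 0 < m) (hx : 0 ≤ x) (hxy : x < y) :
    ∃ k i : ℕ, x < (i : ℝ) * m / 2 ^ k ∧ (i : ℝ) * m / 2 ^ k < y := by
  obtain ⟨k, hk⟩ := exists_pow_lt_of_lt_one (div_pos (sub_pos.mpr hxy) hm) one_half_lt_one
  set u := m / 2 ^ k
  have hu : 0 < u := by positivity
  have hu' : u < y - x := by
    rw [div_pow, one_pow, lt_div_iff₀ hm] at hk
    simpa [u, div_eq_inv_mul] using hk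
  refine ⟨k, ⌊x / u⌋₊ + 1, ?_, ?_⟩ <;> rw [mul_div_assoc]
  · have := Nat.lt_floor_add_one (x / u)
    rw [div_lt_iff₀ hu] at this
    push_cast
    exact this
  · have := Nat.floor_le (div_nonneg hx hu.le)
    rw [le_div_iff₀ hu] at this
    push_cast
    linarith

lemma iSup_ofReal_min_dyadic (m t : ℝ) :
    ⨆ p : {p : ℕ × ℕ // (p.2 : ℝ) * m / 2 ^ p.1 < t},
      ENNReal.ofReal (min ((p.1.2 : ℝ) * m / 2 ^ p.1.1) m) =
      ENNReal.ofReal (min t m) := by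
  refine le_antisymm (iSup_le fun p => ?_) (le_of_forall_lt fun c hc => ?_)
  · exact ENNReal.ofReal_le_ofReal (min_le_min_right m p.2.le)
  have hc_top : c ≠ ∞ := ne_top_of_lt hc
  rw [ENNReal.lt_ofReal_iff_toReal_lt hc_top, lt_min_iff] at hc
  obtain ⟨k, i, hci, hit⟩ := exists_dyadic_btwn (ENNReal.toReal_nonneg.trans_lt hc.2)
    ENNReal.toReal_nonneg (lt_min hc.1 hc.2)
  refine ((ENNReal.lt_ofReal_iff_toReal_lt hc_top).mpr hci).trans_le
    (le_iSup_of_le ⟨(k, i), hit.trans_le (min_le_left _ _)⟩ (ENNReal.ofReal_le_ofReal ?_))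
  exact le_min le_rfl (hit.le.trans (min_le_right _ _))

lemma iUnion_Ico_zpow {b : ℝ} (hb : 1 < b) : ⋃ k : ℤ, Ico (b ^ k) (b ^ (k + 1)) = Ioi 0 := by
  ext x
  simp only [mem_iUnion, mem_Ioi]
  exact ⟨fun ⟨k, hk, _⟩ => (zpow_pos (zero_lt_one.trans hb) k).trans_le hk,
    fun hx => exists_mem_Ico_zpow hx hb⟩

lemma ENNReal.exists_mem_forall_le_two_mul {ι : Type*} {S : Set ι} (hS : S.Nonempty)
    (f : ι → ℝ≥0∞) (hfin : ⨆ i ∈ S, f i ≠ ∞) : ∃ i ∈ S, ∀ j ∈ S, f j ≤ 2 * f i := by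
  set c := ⨆ i ∈ S, f i
  rcases eq_or_ne c 0 with hc | hc
  · obtain ⟨i, hi⟩ := hS
    exact ⟨i, hi, fun j hj => (le_biSup f hj).trans (hc.trans_le zero_le)⟩
  · obtain ⟨i, hi, hlt⟩ := lt_biSup_iff.mp (ENNReal.half_lt_self hc hfin)
    refine ⟨i, hi, fun j hj => ?_⟩
    calc f j ≤ c := le_biSup f hj
      _ = 2 * (c / 2) := (ENNReal.mul_div_cancel (by simp) (by simp)).symm
      _ ≤ 2 * f i := by gcongr

lemma exists_pos_tsum_ofReal_mul_le {ι : Type*} [Countable ι] (c : ι → ℝ) {η : ℝ≥0∞}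
    (hη : η ≠ 0) : ∃ δ : ι → ℝ, (∀ i, 0 < δ i) ∧ ∑' i, ENNReal.ofReal (c i * δ i) ≤ η := by
  obtain ⟨w, hw, hwη⟩ := ENNReal.exists_pos_sum_of_countable hη ι
  refine ⟨fun i => w i / (|c i| + 1), fun i => by have := hw i; positivity, ?_⟩
  refine le_trans (ENNReal.tsum_le_tsum fun i => ?_) hwη.le
  rw [← ENNReal.ofReal_coe_nnreal]
  refine ENNReal.ofReal_le_ofReal ?_
  rw [mul_div_assoc', div_le_iff₀ (by positivity)]
  have := (w i).2
  nlinarith [le_abs_self (c i)]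

lemma ofReal_abs_rpow_mul_le {p a b c d : ℝ} (hp : 0 ≤ p) (hab : |a| ≤ b) (hcd : |c| ≤ d) :
    ENNReal.ofReal (|a| ^ p * c) ≤ ENNReal.ofReal (b ^ p * d) := by
  refine ENNReal.ofReal_le_ofReal
    ((mul_le_mul_of_nonneg_left (le_abs_self c) (by positivity)).trans ?_)
  exact mul_le_mul (Real.rpow_le_rpow (abs_nonneg a) hab hp) hcd (abs_nonneg c)
    (Real.rpow_nonneg ((abs_nonneg a).trans hab) p)

lemma subset_total_of_dyadic {β : Type*} {E : ℕ → ℕ → Set β} (hmono : ∀ k, Monotone (E k))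
    (hrel : ∀ k i, E (k + 1) (2 * i) = E k i) (k i l j : ℕ) :
    E k i ⊆ E l j ∨ E l j ⊆ E k i := by
  have lift : ∀ k n i, E k i = E (k + n) (2 ^ n * i) := fun k n i => by
    induction n with
    | zero => simp
    | succ n ih => rw [ih, ← hrel, pow_succ, mul_comm _ 2, mul_assoc, add_assoc]
  wlog hkl : k ≤ l generalizing k i l j
  · exact (this l j k i (le_of_not_ge hkl)).symm
  obtain ⟨n, rfl⟩ := Nat.exists_eq_add_of_le hkl
  rw [lift k n i]
  exact (le_total (2 ^ n * i) j).imp (fun h => hmono _ h) (fun h => hmono _ h)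

section Rearrangement

variable {μ : Measure α} {g : α → ℝ}

lemma lowerDistrib_eq_top_of_ndRearr_eq_zero {v : α → ℝ}
    (hv : ∀ t ∈ Ioi (0 : ℝ), ndRearr μ v t = 0) {s : ℝ} (hs : 0 < s) :
    lowerDistrib μ v s = ∞ := by
  by_contra hne
  have hlt : lowerDistrib μ v s < ENNReal.ofReal ((lowerDistrib μ v s).toReal + 1) := by
    rw [ENNReal.ofReal_add ENNReal.toReal_nonneg zero_le_one, ENNReal.ofReal_toReal hne,
      ENNReal.ofReal_one]
    exact ENNReal.lt_add_right hne one_ne_zero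
  have hle : ENNReal.ofReal s ≤ 0 :=
    hv ((lowerDistrib μ v s).toReal + 1) (by simp only [mem_Ioi]; positivity) ▸
      le_sSup ⟨s, hs, hlt, rfl⟩
  exact (ENNReal.ofReal_pos.mpr hs).not_ge hle

lemma distrib_antitone_s18 : Antitone (distrib μ g) := fun _ _ h =>
  measure_mono fun _ hx => lt_of_le_of_lt h hx

lemma distrib_le_of_forall_gt {s : ℝ} {c : ℝ≥0∞} (h : ∀ s' > s, distrib μ g s' ≤ c) :
    distrib μ g s ≤ c := by
  have hunion : {x | s < |g x|} = ⋃ n : ℕ, {x | s + 1 / (n + 1) < |g x|} := by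
    ext x
    simp only [mem_ofPred_eq, mem_iUnion]
    refine ⟨fun hx => ?_, fun ⟨n, hn⟩ => lt_trans (by simp; positivity) hn⟩
    obtain ⟨n, hn⟩ := exists_nat_one_div_lt (sub_pos.mpr hx)
    exact ⟨n, by linarith⟩
  have hmono : Monotone fun n : ℕ => {x | s + 1 / ((n : ℝ) + 1) < |g x|} := by
    intro m n hmn x (hx : s + 1 / ((m : ℝ) + 1) < |g x|)
    have : s + 1 / ((n : ℝ) + 1) ≤ s + 1 / ((m : ℝ) + 1) := by gcongr
    exact this.trans_lt hx
  rw [distrib, hunion, hmono.measure_iUnion]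
  exact iSup_le fun n => h _ (by simp; positivity)

lemma niRearr_antitone : Antitone (niRearr μ g) := fun _ _ htt' =>
  sInf_le_sInf fun _ ⟨s, hs, hd, hy⟩ => ⟨s, hs, hd.trans (ENNReal.ofReal_le_ofReal htt'), hy⟩

lemma niRearr_le_ofReal_iff {s t : ℝ} (hs : 0 < s) :
    niRearr μ g t ≤ ENNReal.ofReal s ↔ distrib μ g s ≤ ENNReal.ofReal t := by
  refine ⟨fun h => distrib_le_of_forall_gt fun s' hs' => ?_, fun h => sInf_le ⟨s, hs, h, rfl⟩⟩
  obtain ⟨_, ⟨s'', -, hd, rfl⟩, hlt⟩ :=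
    sInf_lt_iff.mp (h.trans_lt ((ENNReal.ofReal_lt_ofReal_iff (hs.trans hs')).mpr hs'))
  exact (distrib_antitone_s18 ((ENNReal.ofReal_lt_ofReal_iff (hs.trans hs')).mp hlt).le).trans hd

lemma lt_niRearr_toReal_iff (hg : ∀ t ∈ Ioi (0 : ℝ), niRearr μ g t < ∞) {s t : ℝ} (hs : 0 < s)
    (ht : 0 < t) : s < (niRearr μ g t).toReal ↔ ENNReal.ofReal t < distrib μ g s := by
  rw [← ENNReal.ofReal_lt_iff_lt_toReal hs.le (hg t ht).ne, ← not_le, ← not_le,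
    niRearr_le_ofReal_iff hs]

lemma niRearr_congr {f : α → ℝ} (h : ∀ s, 0 < s → distrib μ f s = distrib μ g s) (t : ℝ) :
    niRearr μ f t = niRearr μ g t := by
  unfold niRearr
  congr 1
  ext y
  constructor <;> rintro ⟨s, hs, hd, rfl⟩
  exacts [⟨s, hs, h s hs ▸ hd, rfl⟩, ⟨s, hs, (h s hs).symm ▸ hd, rfl⟩]

lemma distrib_indicator_niRearr_comp (hg : ∀ t ∈ Ioi (0 : ℝ), niRearr μ g t < ∞) {D : Set α}
    (hD : MeasurableSet D) {T : α → ℝ}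
    (hT : MeasurePreserving T (μ.restrict D) (volume.restrict (Ioi 0))) {s : ℝ} (hs : 0 < s) :
    distrib μ (D.indicator fun x => (niRearr μ g (T x)).toReal) s = distrib μ g s := by
  set S := {t | s < (niRearr μ g t).toReal}
  have hS : MeasurableSet S :=
    measurableSet_lt measurable_const niRearr_antitone.measurable.ennreal_toReal
  have hset : {x | s < |D.indicator (fun x => (niRearr μ g (T x)).toReal) x|} = T ⁻¹' S ∩ D := by
    ext x
    by_cases hx : x ∈ D
    · simp [hx, S]
    · simp [hx, hs.le.not_gt]
  have hSI : S ∩ Ioi 0 = {u ∈ Ioi (0 : ℝ) | ENNReal.ofReal u < distrib μ g s} := by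
    ext u
    simp only [mem_inter_iff, mem_ofPred_eq, mem_Ioi, S]
    exact ⟨fun ⟨h, hu⟩ => ⟨hu, (lt_niRearr_toReal_iff hg hs hu).mp h⟩,
      fun ⟨hu, h⟩ => ⟨(lt_niRearr_toReal_iff hg hs hu).mpr h, hu⟩⟩
  rw [distrib, hset, ← Measure.restrict_apply' hD, hT.measure_preimage hS.nullMeasurableSet,
    Measure.restrict_apply hS, hSI, volume_setOf_ofReal_lt]

end Rearrangement

lemma exists_saturated_subset_measure_le (μ : Measure α) (E : Set α) {r : ℝ≥0∞} (hr : r ≠ ∞) :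
    ∃ S ⊆ E, MeasurableSet S ∧ μ S ≤ r ∧
      ∀ F ⊆ E \ S, MeasurableSet F → μ F ≤ r - μ S → μ F = 0 := by
  -- Greedily add a set at least half as large as any set that still fits; a set fitting the
  -- union fits at every stage, so it would force each stage to grow by half its measure.
  set Fits : Set α → Set (Set α) := fun s => {F | MeasurableSet F ∧ F ⊆ E \ s ∧ μ F ≤ r - μ s}
  have greedy : ∀ s, ∃ F ∈ Fits s, ∀ G ∈ Fits s, μ G ≤ 2 * μ F := fun s =>
    ENNReal.exists_mem_forall_le_two_mul (S := Fits s) ⟨∅, .empty, empty_subset _, by simp⟩ μ <|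
      ne_top_of_le_ne_top (tsub_le_self.trans_lt hr.lt_top).ne (iSup₂_le fun _ hF => hF.2.2)
  choose next hnext hmax using greedy
  set s : ℕ → Set α := fun n => Nat.rec ∅ (fun _ t => t ∪ next t) n
  have hs_succ : ∀ n, s (n + 1) = s n ∪ next (s n) := fun _ => rfl
  have hs_add : ∀ n, μ (s (n + 1)) = μ (s n) + μ (next (s n)) := fun n => by
    rw [hs_succ, measure_union (disjoint_sdiff_right.mono_right (hnext _).2.1) (hnext _).1]
  have hs : ∀ n, MeasurableSet (s n) ∧ s n ⊆ E ∧ μ (s n) ≤ r := by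
    intro n
    induction n with
    | zero => exact ⟨.empty, empty_subset _, by simp [s]⟩
    | succ n ih =>
      obtain ⟨hF, hFE, hFr⟩ := hnext (s n)
      refine ⟨hs_succ n ▸ ih.1.union hF,
        hs_succ n ▸ union_subset ih.2.1 (hFE.trans sdiff_subset), ?_⟩
      grw [hs_add, hFr, add_tsub_cancel_of_le ih.2.2]
  have hs_mono : Monotone s := monotone_nat_of_le_succ fun n => hs_succ n ▸ subset_union_left
  refine ⟨⋃ n, s n, iUnion_subset fun n => (hs n).2.1, .iUnion fun n => (hs n).1,
    hs_mono.measure_iUnion ▸ iSup_le fun n => (hs n).2.2, fun F hFS hF hFr => ?_⟩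
  have hfits : ∀ n, F ∈ Fits (s n) := fun n =>
    ⟨hF, hFS.trans (sdiff_subset_sdiff_right (subset_iUnion s n)),
      hFr.trans (tsub_le_tsub_left (measure_mono (subset_iUnion s n)) r)⟩
  have hgrow : ∀ n : ℕ, n * μ F ≤ 2 * μ (s n) := by
    intro n
    induction n with
    | zero => simp
    | succ n ih =>
      grw [hs_add, mul_add, ← ih, ← hmax _ _ (hfits n)]
      push_cast
      rw [add_mul, one_mul]
  by_contra hF0
  obtain ⟨n, hn⟩ := ENNReal.exists_nat_mul_gt hF0 (by finiteness : 2 * r ≠ ∞)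
  exact (hn.trans_le (hgrow n)).not_ge (by grw [(hs n).2.2])

namespace Nonatomic

variable {μ : Measure α} {E : Set α}

lemma exists_subset_pos_lt_top (hμ : Nonatomic μ) (hE : MeasurableSet E) (h0 : 0 < μ E) :
    ∃ F ⊆ E, MeasurableSet F ∧ 0 < μ F ∧ μ F < ∞ := by
  rcases lt_or_ge (μ E) ∞ with h | h
  · exact ⟨E, subset_rfl, hE, h0, h⟩
  · obtain ⟨F, hFE, hF, hF0, hFE'⟩ := hμ E hE h0
    exact ⟨F, hFE, hF, hF0, hFE'.trans_le le_top⟩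

lemma exists_subset_pos_two_mul_le (hμ : Nonatomic μ) (hE : MeasurableSet E) (h0 : 0 < μ E) :
    ∃ F ⊆ E, MeasurableSet F ∧ 0 < μ F ∧ 2 * μ F ≤ μ E := by
  obtain ⟨F, hFE, hF, hF0, hFE'⟩ := hμ E hE h0
  have hsum : μ (E \ F) + μ F = μ E := measure_sdiff_add_inter E hF ▸ by
    rw [inter_eq_self_of_subset_right hFE]
  rcases le_total (μ F) (μ (E \ F)) with h | h
  · exact ⟨F, hFE, hF, hF0, by rw [two_mul, ← hsum]; gcongr⟩
  · refine ⟨E \ F, sdiff_subset, hE.diff hF, ?_, by rw [two_mul, ← hsum]; gcongr⟩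
    rw [measure_sdiff hFE hF.nullMeasurableSet (ne_top_of_lt (hFE'.trans_le le_top))]
    exact tsub_pos_of_lt hFE'

lemma exists_subset_pos_le_s18 (hμ : Nonatomic μ) (hE : MeasurableSet E) (h0 : 0 < μ E)
    {δ : ℝ≥0∞} (hδ : 0 < δ) : ∃ F ⊆ E, MeasurableSet F ∧ 0 < μ F ∧ μ F ≤ δ := by
  obtain ⟨E₀, hE₀E, hE₀, hE₀0, hE₀fin⟩ := hμ.exists_subset_pos_lt_top hE h0
  have halving : ∀ n : ℕ, ∃ F ⊆ E₀, MeasurableSet F ∧ 0 < μ F ∧ 2 ^ n * μ F ≤ μ E₀ := by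
    intro n
    induction n with
    | zero => exact ⟨E₀, subset_rfl, hE₀, hE₀0, by simp⟩
    | succ n ih =>
      obtain ⟨F, hFE₀, hF, hF0, hFle⟩ := ih
      obtain ⟨G, hGF, hG, hG0, hGle⟩ := hμ.exists_subset_pos_two_mul_le hF hF0
      refine ⟨G, hGF.trans hFE₀, hG, hG0, ?_⟩
      calc 2 ^ (n + 1) * μ G = 2 ^ n * (2 * μ G) := by rw [pow_succ, mul_assoc]
        _ ≤ μ E₀ := by grw [hGle]; exact hFle
  obtain ⟨n, hn⟩ := ENNReal.exists_nat_mul_gt hδ.ne' hE₀fin.ne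
  obtain ⟨F, hFE₀, hF, hF0, hFle⟩ := halving n
  refine ⟨F, hFE₀.trans hE₀E, hF, hF0, ?_⟩
  have h2n : (n : ℝ≥0∞) ≤ 2 ^ n := by exact_mod_cast (Nat.lt_two_pow_self).le
  refine (ENNReal.mul_le_mul_iff_right (by simp) (by simp) (a := 2 ^ n)).mp ?_
  grw [hFle, hn.le, h2n]

/-- Sierpiński's theorem. -/
theorem exists_subset_measure_eq_s18 (hμ : Nonatomic μ) (hE : MeasurableSet E) {r : ℝ≥0∞}
    (hr : r ≤ μ E) (hr_top : r ≠ ∞) : ∃ F ⊆ E, MeasurableSet F ∧ μ F = r := by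
  obtain ⟨S, hSE, hS, hSr, hmax⟩ := exists_saturated_subset_measure_le μ E hr_top
  refine ⟨S, hSE, hS, hSr.antisymm (not_lt.mp fun hlt => ?_)⟩
  have hES : 0 < μ (E \ S) := (tsub_pos_of_lt (hlt.trans_le hr)).trans_le le_measure_sdiff
  obtain ⟨F, hFS, hF, hF0, hFr⟩ := hμ.exists_subset_pos_le_s18 (hE.diff hS) hES (tsub_pos_of_lt hlt)
  exact hF0.ne' (hmax F hFS hF hFr)

lemma exists_subset_superset_measure_eq (hμ : Nonatomic μ) {A B : Set α} (hA : MeasurableSet A)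
    (hB : MeasurableSet B) (hAB : A ⊆ B) {r : ℝ≥0∞} (hAr : μ A ≤ r) (hrB : r ≤ μ B)
    (hr : r ≠ ∞) : ∃ C, A ⊆ C ∧ C ⊆ B ∧ MeasurableSet C ∧ μ C = r := by
  obtain ⟨F, hFBA, hF, hFr⟩ := hμ.exists_subset_measure_eq_s18 (hB.diff hA) (r := r - μ A)
    (by grw [← le_measure_sdiff, hrB]) (ne_top_of_le_ne_top hr tsub_le_self)
  refine ⟨A ∪ F, subset_union_left, union_subset hAB (hFBA.trans sdiff_subset), hA.union hF, ?_⟩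
  rw [measure_union (disjoint_sdiff_right.mono_right hFBA) hF, hFr, add_tsub_cancel_of_le hAr]

lemma exists_pairwise_disjoint_subset_measure_eq (hμ : Nonatomic μ) {A : ℕ → Set α}
    (hA : ∀ n, MeasurableSet (A n)) (hA_top : ∀ n, μ (A n) = ∞) {r : ℕ → ℝ≥0∞}
    (hr : ∀ n, r n ≠ ∞) : ∃ D : ℕ → Set α, (∀ n, D n ⊆ A n) ∧ (∀ n, MeasurableSet (D n)) ∧
      (∀ n, μ (D n) = r n) ∧ Pairwise (Function.onFun Disjoint D) := by
  have pick : ∀ n (U : Set α), ∃ D, MeasurableSet U → μ U ≠ ∞ →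
      D ⊆ A n \ U ∧ MeasurableSet D ∧ μ D = r n := by
    intro n U
    by_cases hU : MeasurableSet U ∧ μ U ≠ ∞
    · have : μ (A n \ U) = ∞ := top_le_iff.mp <| by
        grw [← le_measure_sdiff, hA_top, ENNReal.top_sub hU.2]
      obtain ⟨D, hD⟩ := hμ.exists_subset_measure_eq_s18 ((hA n).diff hU.1) (this ▸ le_top) (hr n)
      exact ⟨D, fun _ _ => hD⟩
    · exact ⟨∅, fun h h' => absurd ⟨h, h'⟩ hU⟩
  choose next hnext using pick
  set U : ℕ → Set α := fun n => Nat.rec ∅ (fun n t => t ∪ next n t) n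
  have hU_succ : ∀ n, U (n + 1) = U n ∪ next n (U n) := fun _ => rfl
  have hU : ∀ n, MeasurableSet (U n) ∧ μ (U n) ≠ ∞ := by
    intro n
    induction n with
    | zero => exact ⟨.empty, by simp [U]⟩
    | succ n ih =>
      obtain ⟨-, hD, hμD⟩ := hnext n (U n) ih.1 ih.2
      rw [hU_succ]
      exact ⟨ih.1.union hD, measure_union_ne_top ih.2 (hμD ▸ hr n)⟩
  have hspec := fun n => hnext n (U n) (hU n).1 (hU n).2
  have hU_mono : Monotone U := monotone_nat_of_le_succ fun n => hU_succ n ▸ subset_union_left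
  refine ⟨fun n => next n (U n), fun n => (hspec n).1.trans sdiff_subset, fun n => (hspec n).2.1,
    fun n => (hspec n).2.2, (pairwise_disjoint_on _).mpr fun i j hij => ?_⟩
  have hi : next i (U i) ⊆ U j := (hU_succ i ▸ subset_union_right).trans (hU_mono hij)
  exact (disjoint_sdiff_left.mono_left (hspec j).1).symm.mono_left hi

end Nonatomic

structure IsDyadicRow (μ : Measure α) (D : Set α) (m : ℝ) (k : ℕ) (E : ℕ → Set α) : Prop where
  measurableSet : ∀ i, MeasurableSet (E i)
  mono : Monotone E
  subset : ∀ i, E i ⊆ D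
  measure_eq : ∀ i, μ (E i) = ENNReal.ofReal (min ((i : ℝ) * m / 2 ^ k) m)

namespace IsDyadicRow

variable {μ : Measure α} {D : Set α} {m : ℝ}

lemma zero (hD : MeasurableSet D) (hm : 0 ≤ m) (hμD : μ D = ENNReal.ofReal m) :
    IsDyadicRow μ D m 0 fun i => if i = 0 then ∅ else D where
  measurableSet i := by split_ifs <;> simp [hD]
  mono i j hij := by dsimp only; split_ifs <;> first | rfl | simp_all
  subset i := by split_ifs <;> simp
  measure_eq i := by
    split_ifs with hi
    · simp [hi, hm]
    · rw [hμD, pow_zero, div_one, min_eq_right]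
      exact le_mul_of_one_le_left hm (Nat.one_le_cast.mpr (Nat.one_le_iff_ne_zero.mpr hi))

lemma exists_refinement (hμ : Nonatomic μ) (hm : 0 ≤ m) {k : ℕ} {E : ℕ → Set α}
    (hE : IsDyadicRow μ D m k E) : ∃ E', IsDyadicRow μ D m (k + 1) E' ∧ ∀ i, E' (2 * i) = E i := by
  have h_even_val : ∀ i : ℕ, ((2 * i : ℕ) : ℝ) * m / 2 ^ (k + 1) = i * m / 2 ^ k := fun i => by
    push_cast; rw [pow_succ]; field_simp
  have h_odd_val : ∀ i : ℕ, ((2 * i + 1 : ℕ) : ℝ) * m / 2 ^ (k + 1) = (i + 1 / 2) * m / 2 ^ k :=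
    fun i => by push_cast; rw [pow_succ]; field_simp
  have hmid : ∀ i, ∃ C, E i ⊆ C ∧ C ⊆ E (i + 1) ∧ MeasurableSet C ∧
      μ C = ENNReal.ofReal (min (((2 * i + 1 : ℕ) : ℝ) * m / 2 ^ (k + 1)) m) := fun i =>
    hμ.exists_subset_superset_measure_eq (hE.measurableSet i) (hE.measurableSet (i + 1))
      (hE.mono i.le_succ) (by rw [hE.measure_eq, h_odd_val]; gcongr; linarith)
      (by rw [hE.measure_eq, h_odd_val]; gcongr; push_cast; linarith)
      ENNReal.ofReal_ne_top
  choose C hEC hCE hC hμC using hmid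
  set E' : ℕ → Set α := fun j => if Even j then E (j / 2) else C (j / 2)
  have h_even : ∀ i, E' (2 * i) = E i := fun i => by simp [E']
  have h_odd : ∀ i, E' (2 * i + 1) = C i := fun i => by simp [E', Nat.add_div_of_dvd_right]
  refine ⟨E', ⟨fun j => ?_, monotone_nat_of_le_succ fun j => ?_, fun j => ?_, fun j => ?_⟩, h_even⟩
  all_goals obtain ⟨i, rfl | rfl⟩ := Nat.even_or_odd' j
  · exact h_even i ▸ hE.measurableSet i
  · exact h_odd i ▸ hC i
  · rw [h_even, h_odd]; exact hEC i
  · rw [h_odd, show 2 * i + 1 + 1 = 2 * (i + 1) by ring, h_even]; exact hCE i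
  · exact h_even i ▸ hE.subset i
  · exact h_odd i ▸ (hCE i).trans (hE.subset _)
  · rw [h_even, hE.measure_eq, h_even_val]
  · rw [h_odd, hμC]

end IsDyadicRow

namespace Nonatomic

variable {μ : Measure α} {D : Set α} {m : ℝ}

lemma exists_dyadicRows (hμ : Nonatomic μ) (hD : MeasurableSet D) (hm : 0 ≤ m)
    (hμD : μ D = ENNReal.ofReal m) : ∃ E : ℕ → ℕ → Set α, (∀ k, IsDyadicRow μ D m k (E k)) ∧
      (∀ k i, E (k + 1) (2 * i) = E k i) ∧ E 0 1 = D := by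
  choose! refine hrow hrel using
    fun k (E : ℕ → Set α) (hE : IsDyadicRow μ D m k E) => hE.exists_refinement hμ hm
  set E : ℕ → ℕ → Set α := fun k => Nat.rec (fun i => if i = 0 then ∅ else D) refine k
  have hE : ∀ k, IsDyadicRow μ D m k (E k) := fun k => by
    induction k with
    | zero => exact .zero hD hm hμD
    | succ k ih => exact hrow k _ ih
  exact ⟨E, hE, fun k => hrel k _ (hE k), rfl⟩

theorem exists_measurePreserving_Ico_zero (hμ : Nonatomic μ) (hD : MeasurableSet D) (hm : 0 ≤ m)
    (hμD : μ D = ENNReal.ofReal m) :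
    ∃ T : α → ℝ, MeasurePreserving T (μ.restrict D) (volume.restrict (Ico 0 m)) := by
  classical
  obtain ⟨E, hrow, hrel, hE01⟩ := hμ.exists_dyadicRows hD hm hμD
  set q : ℕ × ℕ → ℝ := fun p => (p.2 : ℝ) * m / 2 ^ p.1
  -- `T x` is the least dyadic level whose set contains `x`; the fallback `m` is harmless on
  -- `D = E 0 1`.
  set T : α → ℝ := fun x => ⨅ p : ℕ × ℕ, if x ∈ E p.1 p.2 then q p else m
  have hT : Measurable T :=
    .iInf fun p => Measurable.ite ((hrow p.1).measurableSet p.2) measurable_const measurable_const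
  have hpre : ∀ t, T ⁻¹' Iio t ∩ D = ⋃ p : {p : ℕ × ℕ // q p < t}, E p.1.1 p.1.2 := by
    intro t
    ext x
    simp only [mem_inter_iff, mem_preimage, mem_Iio, mem_iUnion, Subtype.exists, exists_prop]
    rw [ciInf_lt_iff ⟨0, forall_mem_range.mpr fun p => by split_ifs <;> positivity⟩]
    constructor
    · rintro ⟨⟨p, hp⟩, hxD⟩
      by_cases hx : x ∈ E p.1 p.2
      · exact ⟨p, by simpa [hx] using hp, hx⟩
      · exact ⟨(0, 1), by simpa [q, hx] using hp, hE01 ▸ hxD⟩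
    · rintro ⟨p, hp, hx⟩
      exact ⟨⟨p, by simpa [hx] using hp⟩, (hrow p.1).subset p.2 hx⟩
  have hdir : ∀ t, Directed (· ⊆ ·) fun p : {p : ℕ × ℕ // q p < t} => E p.1.1 p.1.2 :=
    fun t p p' => (subset_total_of_dyadic (fun k => (hrow k).mono) hrel _ _ _ _).elim
      (fun h => ⟨p', h, subset_rfl⟩) (fun h => ⟨p, subset_rfl, h⟩)
  have : IsFiniteMeasure (μ.restrict D) :=
    isFiniteMeasure_restrict.mpr (hμD ▸ ENNReal.ofReal_ne_top)
  refine ⟨T, hT, ext_of_generate_finite _ (borel_eq_generateFrom_Iio ℝ) isPiSystem_Iio ?_ ?_⟩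
  · rintro _ ⟨t, rfl⟩
    rw [Measure.map_apply hT measurableSet_Iio, Measure.restrict_apply' hD, hpre,
      (hdir t).measure_iUnion, Measure.restrict_apply measurableSet_Iio]
    simp only [(hrow _).measure_eq]
    rw [iSup_ofReal_min_dyadic, inter_comm, Ico_inter_Iio, Real.volume_Ico, sub_zero, min_comm]
  · rw [Measure.map_apply hT .univ, preimage_univ, Measure.restrict_apply_univ,
      Measure.restrict_apply_univ, hμD, Real.volume_Ico, sub_zero]

theorem exists_measurePreserving_Ico (hμ : Nonatomic μ) (hD : MeasurableSet D) {a b : ℝ}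
    (hab : a ≤ b) (hμD : μ D = ENNReal.ofReal (b - a)) :
    ∃ T : α → ℝ, MeasurePreserving T (μ.restrict D) (volume.restrict (Ico a b)) := by
  obtain ⟨T, hT⟩ := hμ.exists_measurePreserving_Ico_zero hD (sub_nonneg.mpr hab) hμD
  have hshift := (measurePreserving_add_left volume a).restrict_image_emb
    (measurableEmbedding_addLeft a) (Ico 0 (b - a))
  rw [image_const_add_Ico, add_zero, add_sub_cancel] at hshift
  exact ⟨_, hshift.comp hT⟩

theorem exists_measurePreserving_Ioi (hμ : Nonatomic μ) {A : ℤ → Set α}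
    (hA : ∀ k, MeasurableSet (A k)) (hA_top : ∀ k, μ (A k) = ∞) :
    ∃ (D : ℤ → Set α) (T : α → ℝ), (∀ k, D k ⊆ A k) ∧ (∀ k, MeasurableSet (D k)) ∧
      Pairwise (Function.onFun Disjoint D) ∧ (∀ k, μ (D k) = ENNReal.ofReal (2 ^ k)) ∧
      MeasurePreserving T (μ.restrict (⋃ k, D k)) (volume.restrict (Ioi 0)) ∧
      ∀ k, MeasurePreserving T (μ.restrict (D k))
        (volume.restrict (Ico (2 ^ k) (2 ^ (k + 1)))) := by
  set I : ℤ → Set ℝ := fun k => Ico ((2 : ℝ) ^ k) (2 ^ (k + 1))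
  have hI : ∀ k : ℤ, (2 : ℝ) ^ k ≤ 2 ^ (k + 1) := fun k =>
    zpow_le_zpow_right₀ one_le_two (Int.le_add_one le_rfl)
  have hIdisj : Pairwise (Function.onFun Disjoint I) := by
    simpa [Order.succ_eq_add_one] using
      (zpow_right_mono₀ (one_le_two (α := ℝ))).pairwise_disjoint_on_Ico_succ
  set e := Equiv.intEquivNat
  obtain ⟨D', hDA, hD', hμD', hdisj'⟩ := hμ.exists_pairwise_disjoint_subset_measure_eq
    (A := A ∘ e.symm) (fun n => hA _) (fun n => hA_top _)
    (r := fun n => ENNReal.ofReal (2 ^ e.symm n)) fun _ => ENNReal.ofReal_ne_top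
  set D := D' ∘ e
  have hD : ∀ k, MeasurableSet (D k) := fun k => hD' _
  have hdisj : Pairwise (Function.onFun Disjoint D) := hdisj'.comp_of_injective e.injective
  have hμD : ∀ k, μ (D k) = ENNReal.ofReal (2 ^ k) := fun k => by simpa [D] using hμD' (e k)
  choose T₀ hT₀ using fun k => hμ.exists_measurePreserving_Ico (hD k) (hI k)
    (by rw [hμD, zpow_add_one₀ two_ne_zero]; ring_nf)
  obtain ⟨T, hT, hTT₀⟩ := exists_measurable_piecewise D hD T₀ (fun k => (hT₀ k).measurable)
    fun i j hij x hx => absurd (hdisj hij) (not_disjoint_iff.mpr ⟨x, hx⟩)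
  have hTk : ∀ k, MeasurePreserving T (μ.restrict (D k)) (volume.restrict (I k)) := fun k =>
    ⟨hT, (Measure.map_congr ((ae_restrict_mem (hD k)).mono fun x hx => hTT₀ k hx)).trans
      (hT₀ k).map_eq⟩
  refine ⟨D, T, fun k => by simpa [D] using hDA (e k), hD, hdisj, hμD, ⟨hT, ?_⟩, hTk⟩
  rw [Measure.restrict_iUnion hdisj hD, Measure.map_sum hT.aemeasurable,
    ← iUnion_Ico_zpow one_lt_two,
    Measure.restrict_iUnion hIdisj fun _ => measurableSet_Ico]
  exact congrArg Measure.sum (funext fun k => (hTk k).map_eq)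

end Nonatomic

lemma lintegral_le_tsum_mul_measure {μ : Measure α} {ι : Type*} [Countable ι] {D : ι → Set α}
    (hD : ∀ i, MeasurableSet (D i)) (hdisj : Pairwise (Function.onFun Disjoint D))
    {F : α → ℝ≥0∞} (hF : ∀ x ∉ ⋃ i, D i, F x = 0) {c : ι → ℝ≥0∞}
    (hc : ∀ i, ∀ᵐ x ∂μ.restrict (D i), F x ≤ c i) : ∫⁻ x, F x ∂μ ≤ ∑' i, c i * μ (D i) := by
  have hF_eq : F = (⋃ i, D i).indicator F := by
    ext x; by_cases hx : x ∈ ⋃ i, D i <;> simp [hx, hF]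
  rw [hF_eq, lintegral_indicator (.iUnion hD), lintegral_iUnion hD hdisj]
  refine ENNReal.tsum_le_tsum fun i => (lintegral_mono_ae (hc i)).trans_eq ?_
  rw [lintegral_const, Measure.restrict_apply_univ]

theorem exists_equimeasurable_small_norm_general
    (μ : Measure α) (hμ : Nonatomic μ)
    (p : ℝ) (hp : 0 < p) (v : α → ℝ) (hv : Measurable v)
    (hvz : ∀ t ∈ Ioi (0 : ℝ), ndRearr μ v t = 0)
    (g : α → ℝ)
    (hgfin : ∀ t ∈ Ioi (0 : ℝ), niRearr μ g t < ∞)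
    (ε : ℝ) (hε : 0 < ε) :
    ∃ f : α → ℝ, Measurable f ∧
      (∀ t ∈ Ioi (0 : ℝ), niRearr μ f t = niRearr μ g t) ∧
      (∫⁻ x, ENNReal.ofReal (|f x| ^ p * v x) ∂μ) ^ (1 / p) ≤ ENNReal.ofReal ε := by
  set b : ℤ → ℝ := fun k => (niRearr μ g (2 ^ k)).toReal
  obtain ⟨δ, hδ, hδε⟩ := exists_pos_tsum_ofReal_mul_le (fun k => b k ^ p * 2 ^ k)
    (ENNReal.rpow_pos (ENNReal.ofReal_pos.mpr hε) ENNReal.ofReal_ne_top).ne'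
  obtain ⟨D, T, hDv, hD, hdisj, hμD, hT, hTD⟩ := hμ.exists_measurePreserving_Ioi
    (A := fun k => {x | |v x| < δ k}) (fun k => measurableSet_lt hv.abs measurable_const)
    fun k => lowerDistrib_eq_top_of_ndRearr_eq_zero hvz (hδ k)
  refine ⟨(⋃ k, D k).indicator fun x => (niRearr μ g (T x)).toReal,
    (niRearr_antitone.measurable.comp hT.measurable).ennreal_toReal.indicator (.iUnion hD),
    fun t _ => niRearr_congr
      (fun _ hs => distrib_indicator_niRearr_comp hgfin (.iUnion hD) hT hs) t, ?_⟩
  rw [one_div, ENNReal.rpow_inv_le_iff hp]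
  refine (lintegral_le_tsum_mul_measure hD hdisj (c := fun k => ENNReal.ofReal (b k ^ p * δ k))
    (fun x hx => by simp [hx, hp.ne']) fun k => ?_).trans ?_
  · filter_upwards [ae_restrict_mem (hD k),
      (hTD k).quasiMeasurePreserving.ae (ae_restrict_mem measurableSet_Ico)] with x hxD hxT
    refine ofReal_abs_rpow_mul_le hp.le ?_ (hDv k hxD).le
    rw [indicator_of_mem (mem_iUnion_of_mem k hxD), abs_of_nonneg ENNReal.toReal_nonneg]
    exact ENNReal.toReal_mono (hgfin _ (mem_Ioi.mpr (zpow_pos two_pos k))).ne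
      (niRearr_antitone hxT.1)
  · refine le_trans (le_of_eq (tsum_congr fun k => ?_)) hδε
    rw [hμD, ← ENNReal.ofReal_mul
      (mul_nonneg (Real.rpow_nonneg ENNReal.toReal_nonneg p) (hδ k).le)]
    congr 1
    ring

/-- If `v_* ≡ 0`, then for every `g ≥ 0` with `g^*(t) < ∞` for all `t > 0` and every `ε > 0`
there is `f` equimeasurable with `g` such that `‖f‖_{L^p(R, v)} ≤ ε`. -/
theorem exists_equimeasurable_small_norm
    (μ : Measure α) [SigmaFinite μ] (hμ : Nonatomic μ)
    (p : ℝ) (hp : 0 < p) (v : α → ℝ) (hv : Measurable v) (hv0 : 0 ≤ v)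
    (hvz : ∀ t ∈ Ioi (0 : ℝ), ndRearr μ v t = 0)
    (g : α → ℝ) (hg : Measurable g) (hg0 : 0 ≤ g)
    (hgfin : ∀ t ∈ Ioi (0 : ℝ), niRearr μ g t < ∞)
    (ε : ℝ) (hε : 0 < ε) :
    ∃ f : α → ℝ, Measurable f ∧
      (∀ t ∈ Ioi (0 : ℝ), niRearr μ f t = niRearr μ g t) ∧
      (∫⁻ x, ENNReal.ofReal (|f x| ^ p * v x) ∂μ) ^ (1 / p) ≤ ENNReal.ofReal ε :=
  exists_equimeasurable_small_norm_general μ hμ p hp v hv hvz g hgfin ε hε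
end
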